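/- arXiv:1706.09649 — 5 statements merged into one kernel-verified Lean document; each statement's English description precedes it below -/
import Mathlib

section
/- Let p ≥ 2, 0 ≤ k ≤ p and 1 ≤ i ≤ p be integers, let x ∈ M_p^k with x_i = p, and let x̂ ∈ ℝ^{p−1} be obtained from x by deleting the i-th coordinate. If i ≤ p − k, then x̂ ∈ M_{p−1}^{k} and sep_p^k(y_p, x) = (i − 1) + sep_{p−1}^{k}(y_{p−1}, x̂); if i > p − k, then x̂ ∈ M_{p−1}^{k−1} and sep_p^k(y_p, x) = (i − 1) + sep_{p−1}^{k−1}(y_{p−1}, x̂). -/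
open Polynomial Finset

/-- The set `M_p^k` of representative integer points for the regions of `𝒟_p^k`:
points with entries in `{±1, …, ±p}`, pairwise distinct absolute values, and
`x i ≠ -1` for the first `p - k` coordinates. -/
noncomputable def Mfin (p k : ℕ) : Finset (Fin p → ℤ) :=
  (Fintype.piFinset fun _ : Fin p => Finset.Icc (-(p : ℤ)) (p : ℤ)).filter
    fun x => (∀ i, x i ≠ 0) ∧ (∀ i j, i ≠ j → |x i| ≠ |x j|) ∧
      ∀ i : Fin p, (i : ℕ) < p - k → x i ≠ -1

/-- The number of hyperplanes of `𝒟_p^k` separating `u` and `v`, for `u, v` on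
none of the hyperplanes: hyperplanes `ker (x_i - x_j)` and `ker (x_i + x_j)` for
`i < j`, and `ker x_i` for the last `k` coordinates. -/
noncomputable def sep (p k : ℕ) (u v : Fin p → ℝ) : ℕ :=
  (Finset.univ.filter fun q : Fin p × Fin p =>
      q.1 < q.2 ∧ (u q.1 - u q.2) * (v q.1 - v q.2) < 0).card +
  (Finset.univ.filter fun q : Fin p × Fin p =>
      q.1 < q.2 ∧ (u q.1 + u q.2) * (v q.1 + v q.2) < 0).card +
  (Finset.univ.filter fun i : Fin p => p - k ≤ (i : ℕ) ∧ u i * v i < 0).card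

/-- Coercion of an integer point to a real point. -/
def toR {p : ℕ} (x : Fin p → ℤ) : Fin p → ℝ := fun i => (x i : ℝ)

/-- The base point `y_p = (p, p-1, …, 1)`. -/
noncomputable def ypt (p : ℕ) : Fin p → ℝ := fun i => (p : ℝ) - (i : ℝ)

/-- The rank-generating function of the poset of regions of `𝒟_p^k` with respect
to the region of `y_p`. -/
noncomputable def zeta (p k : ℕ) : Polynomial ℤ :=
  ∑ x ∈ Mfin p k, Polynomial.X ^ sep p k (ypt p) (toR x)

/-- `F e = 1 + t + ⋯ + t^e`. -/
noncomputable def Fpoly (e : ℕ) : Polynomial ℤ :=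
  ∑ j ∈ Finset.range (e + 1), Polynomial.X ^ j

/-- The hyperplanes of the arrangement `𝒟_p^k` in `ℝ^p`. -/
def hyps (p k : ℕ) : Set (Set (Fin p → ℝ)) :=
  {H | (∃ i j : Fin p, i < j ∧ H = {x | x i - x j = 0}) ∨
       (∃ i j : Fin p, i < j ∧ H = {x | x i + x j = 0}) ∨
       (∃ i : Fin p, p - k ≤ (i : ℕ) ∧ H = {x | x i = 0})}

/-- The complement of the union of the hyperplanes of `𝒟_p^k`. -/
def comp (p k : ℕ) : Set (Fin p → ℝ) := (⋃ H ∈ hyps p k, H)ᶜ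

/-- Deletion of the `i`-th coordinate. -/
def deleteCoord {p : ℕ} (i : Fin p) (x : Fin p → ℤ) : Fin (p - 1) → ℤ :=
  fun j =>
    if (j : ℕ) < (i : ℕ) then x ⟨j, by have := j.isLt; omega⟩
    else x ⟨(j : ℕ) + 1, by have := j.isLt; omega⟩

/- ### Auxiliary lemmas -/

lemma aux_succAbove_val {n : ℕ} (i : Fin (n+1)) (j : Fin n) :
    ((i.succAbove j : Fin (n+1)) : ℕ) = if (j:ℕ) < (i:ℕ) then (j:ℕ) else (j:ℕ)+1 := by
  rw [Fin.succAbove]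
  rcases Nat.lt_or_ge (j:ℕ) (i:ℕ) with h | h
  · rw [if_pos, if_pos h]; rfl
    exact (Fin.lt_def).2 h
  · rw [if_neg, if_neg (Nat.not_lt.2 h)]; rfl
    exact fun hc => absurd (Fin.lt_def.1 hc) (Nat.not_lt.2 h)

lemma aux_pos_mul_neg_iff {a b : ℝ} (ha : 0 < a) : a * b < 0 ↔ b < 0 :=
  ⟨fun h => by nlinarith, fun h => mul_neg_of_pos_of_neg ha h⟩

lemma aux_card_filter_prod {α β : Type*} [Fintype α] [Fintype β] (P : α × β → Prop)
    [DecidablePred P] :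
    (univ.filter P).card = ∑ a : α, ∑ b : β, if P (a, b) then 1 else 0 := by
  rw [Finset.card_filter, Fintype.sum_prod_type]

lemma aux_count_lt (n : ℕ) (i : ℕ) (hi : i ≤ n) :
    (∑ a : Fin n, if (a:ℕ) < i then 1 else 0) = i := by
  rw [Fin.sum_univ_eq_sum_range (fun m => if m < i then 1 else 0), ← Finset.card_filter]
  have : (Finset.range n).filter (· < i) = Finset.range i := by
    ext m; simp only [mem_filter, mem_range]; omega
  rw [this, card_range]

lemma aux_hsplit {n : ℕ} (i : Fin (n+1)) (f : Fin (n+1) → Fin (n+1) → ℕ) :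
    (∑ a, ∑ b, f a b)
      = f i i + (∑ b, f i (i.succAbove b)) + (∑ a, f (i.succAbove a) i)
        + ∑ a, ∑ b, f (i.succAbove a) (i.succAbove b) := by
  rw [Fin.sum_univ_succAbove (fun a => ∑ b, f a b) i,
      Fin.sum_univ_succAbove (fun b => f i b) i]
  have h : ∀ a : Fin n, ∑ b, f (i.succAbove a) b
      = f (i.succAbove a) i + ∑ b, f (i.succAbove a) (i.succAbove b) :=
    fun a => Fin.sum_univ_succAbove _ i
  rw [Finset.sum_congr rfl fun a _ => h a, Finset.sum_add_distrib]
  ring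

/-- Pair-count splitting for a relation `R` such that pairs `(i, b)` never count. -/
lemma aux_pair_split {n : ℕ} (i : Fin (n+1)) (x : Fin (n+1) → ℤ)
    (R : ℤ → ℤ → Prop) [DecidableRel R]
    (h1 : ∀ b : Fin n, ¬ R (x i) (x (i.succAbove b))) :
    (univ.filter fun q : Fin (n+1) × Fin (n+1) => q.1 < q.2 ∧ R (x q.1) (x q.2)).card
      = (∑ a : Fin n, if (a:ℕ) < (i:ℕ) ∧ R (x (i.succAbove a)) (x i) then 1 else 0)
        + (univ.filter fun q : Fin n × Fin n =>
            q.1 < q.2 ∧ R (x (i.succAbove q.1)) (x (i.succAbove q.2))).card := by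
  rw [aux_card_filter_prod, aux_card_filter_prod,
    aux_hsplit i (fun a b => if a < b ∧ R (x a) (x b) then 1 else 0)]
  have e1 : (if i < i ∧ R (x i) (x i) then 1 else 0) = 0 := by
    rw [if_neg]; rintro ⟨h, -⟩; exact lt_irrefl _ h
  have e2 : ∀ b : Fin n,
      (if i < i.succAbove b ∧ R (x i) (x (i.succAbove b)) then 1 else 0) = 0 := by
    intro b; rw [if_neg]; rintro ⟨-, h⟩; exact h1 b h
  have e3 : ∀ a : Fin n, (if i.succAbove a < i ∧ R (x (i.succAbove a)) (x i) then 1 else 0)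
      = if (a:ℕ) < (i:ℕ) ∧ R (x (i.succAbove a)) (x i) then 1 else 0 := by
    intro a
    have : i.succAbove a < i ↔ (a:ℕ) < (i:ℕ) := by
      rw [Fin.lt_def, aux_succAbove_val]
      have hne0 := Fin.succAbove_ne i a
      have hne : ((i.succAbove a : Fin (n+1)) : ℕ) ≠ (i:ℕ) := fun hc => hne0 (Fin.ext hc)
      rw [aux_succAbove_val] at hne
      split_ifs with h <;> omega
    simp only [this]
  have e4 : ∀ a b : Fin n,
      (if i.succAbove a < i.succAbove b ∧ R (x (i.succAbove a)) (x (i.succAbove b)) then 1 else 0)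
      = if a < b ∧ R (x (i.succAbove a)) (x (i.succAbove b)) then 1 else 0 := by
    intro a b; simp only [Fin.succAbove_lt_succAbove_iff]
  rw [e1, Finset.sum_congr rfl fun b _ => e2 b, Finset.sum_congr rfl fun a _ => e3 a,
    Finset.sum_const, Finset.sum_congr rfl fun a _ => Finset.sum_congr rfl fun b _ => e4 a b]
  simp

lemma aux_ypt_pos (m : ℕ) (a : Fin m) : 0 < ypt m a := by
  unfold ypt
  have := a.isLt
  have : ((a:ℕ):ℝ) < (m:ℝ) := by exact_mod_cast this
  simpa using by linarith

lemma aux_ypt_sub_pos {m : ℕ} {a b : Fin m} (h : a < b) : 0 < ypt m a - ypt m b := by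
  unfold ypt
  have : ((a:ℕ):ℝ) < ((b:ℕ):ℝ) := by exact_mod_cast Fin.lt_def.1 h
  linarith

/-- `sep` from the base point, in purely integer terms. -/
lemma aux_sep_int (m k : ℕ) (z : Fin m → ℤ) :
    sep m k (ypt m) (toR z)
      = (univ.filter fun q : Fin m × Fin m => q.1 < q.2 ∧ z q.1 < z q.2).card
        + (univ.filter fun q : Fin m × Fin m => q.1 < q.2 ∧ z q.1 + z q.2 < 0).card
        + (univ.filter fun j : Fin m => m - k ≤ (j:ℕ) ∧ z j < 0).card := by
  unfold sep
  congr 2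
  · refine congrArg Finset.card (Finset.filter_congr ?_)
    intro q _
    refine and_congr_right fun h => ?_
    rw [aux_pos_mul_neg_iff (aux_ypt_sub_pos h)]
    unfold toR
    rw [sub_neg]
    exact_mod_cast Iff.rfl
  · refine congrArg Finset.card (Finset.filter_congr ?_)
    intro q _
    refine and_congr_right fun h => ?_
    have hy : 0 < ypt m q.1 + ypt m q.2 := by
      have := aux_ypt_pos m q.1; have := aux_ypt_pos m q.2; linarith
    rw [aux_pos_mul_neg_iff hy]
    unfold toR
    constructor
    · intro h2; exact_mod_cast h2
    · intro h2; exact_mod_cast h2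
  · congr 1
    funext j
    refine propext (and_congr_right fun h => ?_)
    rw [aux_pos_mul_neg_iff (aux_ypt_pos m j)]
    unfold toR
    exact_mod_cast Iff.rfl

theorem delete_coord_pos_p (p k : ℕ) (hp : 2 ≤ p) (hk : k ≤ p) (i : Fin p)
    (x : Fin p → ℤ) (hx : x ∈ Mfin p k) (hxi : x i = (p : ℤ)) :
    ((i : ℕ) < p - k →
      deleteCoord i x ∈ Mfin (p - 1) k ∧
      sep p k (ypt p) (toR x)
        = (i : ℕ) + sep (p - 1) k (ypt (p - 1)) (toR (deleteCoord i x))) ∧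
    (p - k ≤ (i : ℕ) →
      deleteCoord i x ∈ Mfin (p - 1) (k - 1) ∧
      sep p k (ypt p) (toR x)
        = (i : ℕ) + sep (p - 1) (k - 1) (ypt (p - 1)) (toR (deleteCoord i x))) := by
  obtain ⟨n, rfl⟩ : ∃ n, p = n + 1 := ⟨p - 1, by omega⟩
  simp only [Mfin, Finset.mem_filter, Fintype.mem_piFinset, Finset.mem_Icc] at hx
  obtain ⟨hbd, hnz, habs, hneg1⟩ := hx
  have hxi' : x i = (n:ℤ) + 1 := by rw [hxi]; push_cast; ring
  -- every other coordinate is small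
  have hsmall : ∀ a : Fin (n+1), a ≠ i → -(n:ℤ) ≤ x a ∧ x a ≤ (n:ℤ) := by
    intro a ha
    have h1 := hbd a
    push_cast at h1
    have h2 := habs a i ha
    rw [hxi'] at h2
    have h3 : |x a| ≤ (n:ℤ) + 1 := abs_le.mpr ⟨by linarith [h1.1], h1.2⟩
    have h4 : |(n:ℤ) + 1| = (n:ℤ) + 1 := abs_of_nonneg (by positivity)
    rw [h4] at h2
    have h5 : |x a| ≤ (n:ℤ) := by omega
    exact abs_le.mp h5
  have del_eq : ∀ j : Fin n, deleteCoord i x j = x (i.succAbove j) := by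
    intro j
    show (if (j:ℕ) < (i:ℕ) then x ⟨(j:ℕ), by omega⟩ else x ⟨(j:ℕ)+1, by omega⟩)
        = x (i.succAbove j)
    have hv := aux_succAbove_val i j
    split_ifs with h
    · rw [if_pos h] at hv
      congr 1
      exact Fin.ext hv.symm
    · rw [if_neg h] at hv
      congr 1
      exact Fin.ext hv.symm
  -- generic membership
  have hmem : ∀ k' : ℕ,
      (∀ j : Fin n, (j:ℕ) < n - k' → ((i.succAbove j : Fin (n+1)):ℕ) < (n+1) - k) →
      deleteCoord i x ∈ Mfin n k' := by
    intro k' hth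
    simp only [Mfin, Finset.mem_filter, Fintype.mem_piFinset, Finset.mem_Icc]
    refine ⟨fun j => ?_, fun j => ?_, fun a b hab => ?_, fun j hj => ?_⟩
    · rw [del_eq j]
      have := hsmall _ (Fin.succAbove_ne i j)
      push_cast
      omega
    · rw [del_eq j]; exact hnz _
    · rw [del_eq a, del_eq b]
      exact habs _ _ fun hc => hab (Fin.succAbove_right_injective hc)
    · rw [del_eq j]
      exact hneg1 _ (hth j hj)
  -- generic separation count
  have hsep : ∀ k' : ℕ,
      (∀ j : Fin n, ((n+1) - k ≤ ((i.succAbove j : Fin (n+1)):ℕ) ↔ n - k' ≤ (j:ℕ))) →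
      sep (n+1) k (ypt (n+1)) (toR x) = (i:ℕ) + sep n k' (ypt n) (toR (deleteCoord i x)) := by
    intro k' hth
    rw [aux_sep_int, aux_sep_int]
    have hlt : ∀ b : Fin n, ¬ (x i < x (i.succAbove b)) := by
      intro b
      have := hsmall _ (Fin.succAbove_ne i b)
      omega
    have hsum0 : ∀ b : Fin n, ¬ (x i + x (i.succAbove b) < 0) := by
      intro b
      have := hsmall _ (Fin.succAbove_ne i b)
      omega
    -- first term
    have hT1 : (univ.filter fun q : Fin (n+1) × Fin (n+1) =>
          q.1 < q.2 ∧ x q.1 < x q.2).card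
        = (i:ℕ) + (univ.filter fun q : Fin n × Fin n =>
            q.1 < q.2 ∧ deleteCoord i x q.1 < deleteCoord i x q.2).card := by
      rw [aux_pair_split i x (· < ·) hlt]
      congr 1
      · have e : ∀ a : Fin n, (if (a:ℕ) < (i:ℕ) ∧ x (i.succAbove a) < x i then 1 else 0)
            = if (a:ℕ) < (i:ℕ) then 1 else 0 := by
          intro a
          have hx' : x (i.succAbove a) < x i := by
            have := hsmall _ (Fin.succAbove_ne i a); omega
          simp [hx']
        rw [Finset.sum_congr rfl fun a _ => e a, aux_count_lt n i (by omega)]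
      · congr 2
        funext q
        rw [del_eq q.1, del_eq q.2]
    -- second term
    have hT2 : (univ.filter fun q : Fin (n+1) × Fin (n+1) =>
          q.1 < q.2 ∧ x q.1 + x q.2 < 0).card
        = (univ.filter fun q : Fin n × Fin n =>
            q.1 < q.2 ∧ deleteCoord i x q.1 + deleteCoord i x q.2 < 0).card := by
      rw [aux_pair_split i x (fun a b => a + b < 0) hsum0]
      have e : ∀ a : Fin n,
          (if (a:ℕ) < (i:ℕ) ∧ x (i.succAbove a) + x i < 0 then 1 else 0) = 0 := by
        intro a
        have hx' : ¬ (x (i.succAbove a) + x i < 0) := by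
          have := hsmall _ (Fin.succAbove_ne i a); omega
        simp [hx']
      rw [Finset.sum_congr rfl fun a _ => e a, Finset.sum_const_zero]
      rw [zero_add]
      congr 2
      funext q
      rw [del_eq q.1, del_eq q.2]
    -- third term
    have hT3 : (univ.filter fun j : Fin (n+1) => (n+1) - k ≤ (j:ℕ) ∧ x j < 0).card
        = (univ.filter fun j : Fin n => n - k' ≤ (j:ℕ) ∧ deleteCoord i x j < 0).card := by
      rw [Finset.card_filter, Finset.card_filter,
        Fin.sum_univ_succAbove
          (fun j : Fin (n+1) => if (n+1) - k ≤ (j:ℕ) ∧ x j < 0 then 1 else 0) i]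
      have e0 : (if (n+1) - k ≤ (i:ℕ) ∧ x i < 0 then 1 else 0) = 0 := by
        rw [if_neg]; rintro ⟨-, h⟩; omega
      have e : ∀ j : Fin n,
          (if (n+1) - k ≤ ((i.succAbove j : Fin (n+1)):ℕ) ∧ x (i.succAbove j) < 0 then 1 else 0)
          = if n - k' ≤ (j:ℕ) ∧ deleteCoord i x j < 0 then 1 else 0 := by
        intro j
        rw [del_eq j]
        simp only [hth j]
      rw [e0, zero_add, Finset.sum_congr rfl fun j _ => e j]
    rw [hT1, hT2, hT3]
    ring
  constructor
  · intro hcase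
    refine ⟨hmem k ?_, hsep k ?_⟩
    · intro j hj
      rw [aux_succAbove_val]
      have := j.isLt; have := i.isLt
      split_ifs with h <;> omega
    · intro j
      rw [aux_succAbove_val]
      have := j.isLt; have := i.isLt
      split_ifs with h <;> omega
  · intro hcase
    refine ⟨hmem (k-1) ?_, hsep (k-1) ?_⟩
    · intro j hj
      rw [aux_succAbove_val]
      have := j.isLt; have := i.isLt
      split_ifs with h <;> omega
    · intro j
      rw [aux_succAbove_val]
      have := j.isLt; have := i.isLt
      split_ifs with h <;> omega
end

section
/- Let p ≥ 1 and 0 ≤ k ≤ p be integers, let x ∈ M_p^k, and let i ≠ j be indices in {1, …, p} with x_j = x_i + 1 or x_j = x_i − 1. Let x′ be obtained from x by exchanging the i-th and j-th entries (x′_i = x_j, x′_j = x_i, and x′_m = x_m for m ∉ {i, j}). Then x′ lies on none of the hyperplanes of 𝒟_p^k, and exactly one hyperplane of 𝒟_p^k separates x and x′, namely ker(x_i − x_j); in particular sep_p^k(x, x′) = 1. -/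
open Polynomial Finset

/-- if `x ∈ M_p^k` and `x_j = x_i ± 1`, then the point `x'` obtained from
`x` by exchanging the `i`-th and `j`-th entries lies on none of the hyperplanes of
`𝒟_p^k`, and exactly one hyperplane of `𝒟_p^k` separates `x` and `x'`, namely
`ker (x_i - x_j)`; in particular `sep_p^k(x, x') = 1`. -/
theorem wall_crossing_diff (p k : ℕ) (hp : 1 ≤ p) (hk : k ≤ p)
    (x : Fin p → ℤ) (hx : x ∈ Mfin p k) (i j : Fin p) (hij : i ≠ j)
    (hval : x j = x i + 1 ∨ x j = x i - 1)
    (x' : Fin p → ℤ) (hx'i : x' i = x j) (hx'j : x' j = x i)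
    (hx'other : ∀ m : Fin p, m ≠ i → m ≠ j → x' m = x m) :
    (∀ H ∈ hyps p k, toR x' ∉ H) ∧
    (∀ a b : Fin p, a < b →
      ((toR x a - toR x b) * (toR x' a - toR x' b) < 0 ↔
        (a = i ∧ b = j) ∨ (a = j ∧ b = i))) ∧
    (∀ a b : Fin p, a < b →
      ¬ ((toR x a + toR x b) * (toR x' a + toR x' b) < 0)) ∧
    (∀ a : Fin p, p - k ≤ (a : ℕ) → ¬ (toR x a * toR x' a < 0)) ∧
    sep p k (toR x) (toR x') = 1 := by
  simp only [Mfin, Finset.mem_filter] at hx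
  obtain ⟨-, hne0, habs, -⟩ := hx
  have sqpos : ∀ n : ℤ, n ≠ 0 → 0 < n * n := by
    intro n hn
    rcases hn.lt_or_gt with h | h <;> nlinarith
  have hxx : ∀ a b : Fin p, a ≠ b → x a ≠ x b ∧ x a ≠ -x b := by
    intro a b hab
    have h := habs a b hab
    constructor <;> intro h' <;> apply h <;> rw [h'] <;> simp [abs_neg]
  have key : ∀ c : ℤ, c ≠ x i → c ≠ x j → 0 < (x i - c) * (x j - c) := by
    intro c h1 h2
    have h5 : x i - c ≥ 1 ∨ x i - c ≤ -1 := by omega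
    have h6 : x j - c ≥ 1 ∨ x j - c ≤ -1 := by omega
    rcases hval with h | h <;> rcases h5 with h5 | h5 <;> rcases h6 with h6 | h6 <;>
      nlinarith
  have hswap : ∀ a, x' a = x (Equiv.swap i j a) := by
    intro a
    rcases eq_or_ne a i with rfl | hai
    · rw [hx'i, Equiv.swap_apply_left]
    rcases eq_or_ne a j with rfl | haj
    · rw [hx'j, Equiv.swap_apply_right]
    · rw [hx'other a hai haj, Equiv.swap_apply_of_ne_of_ne hai haj]
  have hx'abs : ∀ a b : Fin p, a ≠ b → |x' a| ≠ |x' b| := by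
    intro a b hab
    rw [hswap, hswap]
    exact habs _ _ fun h => hab ((Equiv.swap i j).injective h)
  have hx'ne0 : ∀ a : Fin p, x' a ≠ 0 := by
    intro a; rw [hswap]; exact hne0 _
  have hxx' : ∀ a b : Fin p, a ≠ b → x' a ≠ x' b ∧ x' a ≠ -x' b := by
    intro a b hab
    have h := hx'abs a b hab
    constructor <;> intro h' <;> apply h <;> rw [h'] <;> simp [abs_neg]
  -- positivity of the difference product off the crossed wall
  have pos2 : ∀ a b : Fin p, a ≠ b → ¬((a = i ∧ b = j) ∨ (a = j ∧ b = i)) →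
      0 < (x a - x b) * (x' a - x' b) := by
    intro a b hab hC
    rcases eq_or_ne a i with rfl | hai
    · have hbj : b ≠ j := fun h => hC (Or.inl ⟨rfl, h⟩)
      rw [hx'i, hx'other b hab.symm hbj]
      exact key (x b) (hxx b a hab.symm).1 (hxx b j hbj).1
    rcases eq_or_ne a j with rfl | haj
    · have hbi : b ≠ i := fun h => hC (Or.inr ⟨rfl, h⟩)
      rw [hx'j, hx'other b hbi hab.symm]
      have := key (x b) (hxx b i hbi).1 (hxx b a hab.symm).1
      nlinarith
    rcases eq_or_ne b i with rfl | hbi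
    · rw [hx'other a hai haj, hx'i]
      have := key (x a) (hxx a b hai).1 (hxx a j haj).1
      nlinarith
    rcases eq_or_ne b j with rfl | hbj
    · rw [hx'other a hai haj, hx'j]
      have := key (x a) (hxx a i hai).1 (hxx a b haj).1
      nlinarith
    · rw [hx'other a hai haj, hx'other b hbi hbj]
      have h : x a - x b ≠ 0 := fun h => (hxx a b hab).1 (by omega)
      have := sqpos _ h
      nlinarith
  have main2 : ∀ a b : Fin p, a ≠ b →
      ((x a - x b) * (x' a - x' b) < 0 ↔ (a = i ∧ b = j) ∨ (a = j ∧ b = i)) := by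
    intro a b hab
    by_cases hC : (a = i ∧ b = j) ∨ (a = j ∧ b = i)
    · refine iff_of_true ?_ hC
      rcases hC with ⟨rfl, rfl⟩ | ⟨rfl, rfl⟩
      · have h : (x a - x b) * (x' a - x' b) = -1 := by
          rw [hx'i, hx'j]; rcases hval with h | h <;> rw [h] <;> ring
        rw [h]; norm_num
      · have h : (x a - x b) * (x' a - x' b) = -1 := by
          rw [hx'i, hx'j]; rcases hval with h | h <;> rw [h] <;> ring
        rw [h]; norm_num
    · exact iff_of_false (not_lt.2 (pos2 a b hab hC).le) hC
  have main3 : ∀ a b : Fin p, a ≠ b → 0 < (x a + x b) * (x' a + x' b) := by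
    intro a b hab
    rcases eq_or_ne a i with rfl | hai
    · rcases eq_or_ne b j with rfl | hbj
      · rw [hx'i, hx'j]
        have h : x a + x b ≠ 0 := fun h => (hxx a b hab).2 (by omega)
        have := sqpos _ h
        nlinarith
      · rw [hx'i, hx'other b hab.symm hbj]
        have h1 : -(x b) ≠ x a := fun h => (hxx a b hab).2 (by omega)
        have h2 : -(x b) ≠ x j := fun h => (hxx j b hbj.symm).2 (by omega)
        have := key (-(x b)) h1 h2
        nlinarith
    rcases eq_or_ne a j with rfl | haj
    · rcases eq_or_ne b i with rfl | hbi
      · rw [hx'j, hx'i]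
        have h : x a + x b ≠ 0 := fun h => (hxx a b hab).2 (by omega)
        have := sqpos _ h
        nlinarith
      · rw [hx'j, hx'other b hbi hab.symm]
        have h1 : -(x b) ≠ x i := fun h => (hxx i b hbi.symm).2 (by omega)
        have h2 : -(x b) ≠ x a := fun h => (hxx a b hab).2 (by omega)
        have := key (-(x b)) h1 h2
        nlinarith
    rcases eq_or_ne b i with rfl | hbi
    · rw [hx'other a hai haj, hx'i]
      have h1 : -(x a) ≠ x b := fun h => (hxx b a hab.symm).2 (by omega)
      have h2 : -(x a) ≠ x j := fun h => (hxx j a haj.symm).2 (by omega)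
      have := key (-(x a)) h1 h2
      nlinarith
    rcases eq_or_ne b j with rfl | hbj
    · rw [hx'other a hai haj, hx'j]
      have h1 : -(x a) ≠ x i := fun h => (hxx i a hai.symm).2 (by omega)
      have h2 : -(x a) ≠ x b := fun h => (hxx b a hab.symm).2 (by omega)
      have := key (-(x a)) h1 h2
      nlinarith
    · rw [hx'other a hai haj, hx'other b hbi hbj]
      have h : x a + x b ≠ 0 := fun h => (hxx a b hab).2 (by omega)
      have := sqpos _ h
      nlinarith
  have main4 : ∀ a : Fin p, 0 < x a * x' a := by
    intro a
    rcases eq_or_ne a i with rfl | hai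
    · rw [hx'i]
      have := key 0 (fun h => hne0 a h.symm) (fun h => hne0 j h.symm)
      nlinarith
    rcases eq_or_ne a j with rfl | haj
    · rw [hx'j]
      have := key 0 (fun h => hne0 i h.symm) (fun h => hne0 a h.symm)
      nlinarith
    · rw [hx'other a hai haj]
      exact sqpos _ (hne0 a)
  -- real versions
  have r2 : ∀ a b : Fin p, a < b →
      ((toR x a - toR x b) * (toR x' a - toR x' b) < 0 ↔
        (a = i ∧ b = j) ∨ (a = j ∧ b = i)) := by
    intro a b hab
    rw [show (toR x a - toR x b) * (toR x' a - toR x' b)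
        = (((x a - x b) * (x' a - x' b) : ℤ) : ℝ) by simp only [toR]; push_cast; ring,
      Int.cast_lt_zero]
    exact main2 a b hab.ne
  have r3 : ∀ a b : Fin p, a < b →
      ¬ ((toR x a + toR x b) * (toR x' a + toR x' b) < 0) := by
    intro a b hab
    rw [show (toR x a + toR x b) * (toR x' a + toR x' b)
        = (((x a + x b) * (x' a + x' b) : ℤ) : ℝ) by simp only [toR]; push_cast; ring,
      Int.cast_lt_zero, not_lt]
    exact (main3 a b hab.ne).le
  have r4 : ∀ a : Fin p, p - k ≤ (a : ℕ) → ¬ (toR x a * toR x' a < 0) := by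
    intro a _
    rw [show toR x a * toR x' a = ((x a * x' a : ℤ) : ℝ) by simp [toR],
      Int.cast_lt_zero, not_lt]
    exact (main4 a).le
  -- the hyperplane claim
  have r1 : ∀ H ∈ hyps p k, toR x' ∉ H := by
    intro H hH
    rcases hH with ⟨a, b, hab, rfl⟩ | ⟨a, b, hab, rfl⟩ | ⟨a, -, rfl⟩
    · intro h
      simp only [Set.mem_setOf_eq, toR, sub_eq_zero] at h
      exact (hxx' a b hab.ne).1 (by exact_mod_cast h)
    · intro h
      simp only [Set.mem_setOf_eq, toR] at h
      have : (x' a : ℝ) = -(x' b : ℝ) := by linarith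
      exact (hxx' a b hab.ne).2 (by exact_mod_cast this)
    · intro h
      simp only [Set.mem_setOf_eq, toR] at h
      exact hx'ne0 a (by exact_mod_cast h)
  refine ⟨r1, r2, r3, r4, ?_⟩
  -- sep computation
  rw [sep]
  have c2 : (Finset.univ.filter fun q : Fin p × Fin p =>
      q.1 < q.2 ∧ (toR x q.1 + toR x q.2) * (toR x' q.1 + toR x' q.2) < 0).card = 0 := by
    rw [Finset.card_eq_zero, Finset.filter_eq_empty_iff]
    rintro q - ⟨hlt, hprod⟩
    exact r3 q.1 q.2 hlt hprod
  have c3 : (Finset.univ.filter fun a : Fin p =>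
      p - k ≤ (a : ℕ) ∧ toR x a * toR x' a < 0).card = 0 := by
    rw [Finset.card_eq_zero, Finset.filter_eq_empty_iff]
    rintro a - ⟨hle, hprod⟩
    exact r4 a hle hprod
  have c1 : (Finset.univ.filter fun q : Fin p × Fin p =>
      q.1 < q.2 ∧ (toR x q.1 - toR x q.2) * (toR x' q.1 - toR x' q.2) < 0).card = 1 := by
    rcases hij.lt_or_gt with hlt | hlt
    · rw [show (Finset.univ.filter fun q : Fin p × Fin p =>
          q.1 < q.2 ∧ (toR x q.1 - toR x q.2) * (toR x' q.1 - toR x' q.2) < 0)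
          = {(i, j)} from ?_]
      · exact Finset.card_singleton _
      ext q
      simp only [Finset.mem_filter, Finset.mem_univ, true_and, Finset.mem_singleton]
      constructor
      · rintro ⟨hq, hprod⟩
        rcases (r2 q.1 q.2 hq).mp hprod with ⟨h1, h2⟩ | ⟨h1, h2⟩
        · exact Prod.ext h1 h2
        · rw [h1, h2] at hq; exact absurd hq (not_lt.2 hlt.le)
      · rintro rfl
        exact ⟨hlt, (r2 i j hlt).mpr (Or.inl ⟨rfl, rfl⟩)⟩
    · rw [show (Finset.univ.filter fun q : Fin p × Fin p =>
          q.1 < q.2 ∧ (toR x q.1 - toR x q.2) * (toR x' q.1 - toR x' q.2) < 0)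
          = {(j, i)} from ?_]
      · exact Finset.card_singleton _
      ext q
      simp only [Finset.mem_filter, Finset.mem_univ, true_and, Finset.mem_singleton]
      constructor
      · rintro ⟨hq, hprod⟩
        rcases (r2 q.1 q.2 hq).mp hprod with ⟨h1, h2⟩ | ⟨h1, h2⟩
        · rw [h1, h2] at hq; exact absurd hq (not_lt.2 hlt.le)
        · exact Prod.ext h1 h2
      · rintro rfl
        exact ⟨hlt, (r2 j i hlt).mpr (Or.inr ⟨rfl, rfl⟩)⟩
  rw [c1, c2, c3]
end

section
/- Let p ≥ 1 and 0 ≤ k ≤ p be integers, let x ∈ M_p^k, and let i ≠ j be indices in {1, …, p} with x_j = −(x_i + 1) or x_j = −(x_i − 1). Let x′ be obtained from x by exchanging the absolute values of the i-th and j-th entries while maintaining their respective signs (x′_i = sign(x_i)·|x_j|, x′_j = sign(x_j)·|x_i|, and x′_m = x_m for m ∉ {i, j}). Then x′ lies on none of the hyperplanes of 𝒟_p^k, and exactly one hyperplane of 𝒟_p^k separates x and x′, namely ker(x_i + x_j); in particular sep_p^k(x, x′) = 1. -/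
open Polynomial Finset

lemma step_prod (u v w : ℤ) (h : v = u + 1 ∨ v = u - 1) (hu : w ≠ u) (hv : w ≠ v) :
    0 < (u - w) * (v - w) := by
  have hcase : (0 < u - w ∧ 0 < v - w) ∨ (u - w < 0 ∧ v - w < 0) := by omega
  rcases hcase with ⟨h1, h2⟩ | ⟨h1, h2⟩
  · exact mul_pos h1 h2
  · exact mul_pos_of_neg_of_neg h1 h2

/-- if `x ∈ M_p^k` and `x_j = -(x_i ± 1)`, then the point `x'` obtained
from `x` by exchanging the absolute values of the `i`-th and `j`-th entries while
maintaining their signs lies on none of the hyperplanes of `𝒟_p^k`, and exactly one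
hyperplane of `𝒟_p^k` separates `x` and `x'`, namely `ker (x_i + x_j)`; in particular
`sep_p^k(x, x') = 1`. -/
theorem wall_crossing_sum (p k : ℕ) (hp : 1 ≤ p) (hk : k ≤ p)
    (x : Fin p → ℤ) (hx : x ∈ Mfin p k) (i j : Fin p) (hij : i ≠ j)
    (hval : x j = -(x i + 1) ∨ x j = -(x i - 1))
    (x' : Fin p → ℤ) (hx'i : x' i = (x i).sign * |x j|) (hx'j : x' j = (x j).sign * |x i|)
    (hx'other : ∀ m : Fin p, m ≠ i → m ≠ j → x' m = x m) :
    (∀ H ∈ hyps p k, toR x' ∉ H) ∧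
    (∀ a b : Fin p, a < b →
      ¬ ((toR x a - toR x b) * (toR x' a - toR x' b) < 0)) ∧
    (∀ a b : Fin p, a < b →
      ((toR x a + toR x b) * (toR x' a + toR x' b) < 0 ↔
        (a = i ∧ b = j) ∨ (a = j ∧ b = i))) ∧
    (∀ a : Fin p, p - k ≤ (a : ℕ) → ¬ (toR x a * toR x' a < 0)) ∧
    sep p k (toR x) (toR x') = 1 := by
  simp only [Mfin, Finset.mem_filter] at hx
  obtain ⟨-, h0, hdist, -⟩ := hx
  have hsum : x i + x j = 1 ∨ x i + x j = -1 := by omega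
  have habs : (x i).natAbs ≠ (x j).natAbs := by
    intro h
    exact hdist i j hij (by rw [Int.abs_eq_natAbs, Int.abs_eq_natAbs, h])
  have hsigns : (0 < x i ∧ x j < 0) ∨ (x i < 0 ∧ 0 < x j) := by
    have h1 := h0 i; have h2 := h0 j; omega
  have hxi' : x' i = - x j := by
    rcases hsigns with ⟨hi, hj⟩ | ⟨hi, hj⟩
    · rw [hx'i, Int.sign_eq_one_of_pos hi, abs_of_neg hj]; ring
    · rw [hx'i, Int.sign_eq_neg_one_of_neg hi, abs_of_pos hj]; ring
  have hxj' : x' j = - x i := by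
    rcases hsigns with ⟨hi, hj⟩ | ⟨hi, hj⟩
    · rw [hx'j, Int.sign_eq_neg_one_of_neg hj, abs_of_pos hi]; ring
    · rw [hx'j, Int.sign_eq_one_of_pos hj, abs_of_neg hi]; ring
  have hstep_i : x' i = x i + 1 ∨ x' i = x i - 1 := by omega
  have hstep_j : x' j = x j + 1 ∨ x' j = x j - 1 := by omega
  have hne : ∀ a b : Fin p, a ≠ b → x a ≠ x b ∧ x a ≠ -x b := by
    intro a b h
    have hd := hdist a b h
    constructor
    · intro he; exact hd (by rw [he])
    · intro he; exact hd (by rw [he, abs_neg])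
  have h0' : ∀ a, x' a ≠ 0 := by
    intro a
    rcases eq_or_ne a i with rfl | hai
    · rw [hxi']; simpa using h0 j
    rcases eq_or_ne a j with rfl | haj
    · rw [hxj']; simpa using h0 i
    · rw [hx'other a hai haj]; exact h0 a
  have habs' : ∀ a, |x' a| = |x (Equiv.swap i j a)| := by
    intro a
    rcases eq_or_ne a i with rfl | h1
    · rw [Equiv.swap_apply_left, hxi', abs_neg]
    rcases eq_or_ne a j with rfl | h2
    · rw [Equiv.swap_apply_right, hxj', abs_neg]
    · rw [Equiv.swap_apply_of_ne_of_ne h1 h2, hx'other a h1 h2]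
  have hdist' : ∀ a b : Fin p, a ≠ b → |x' a| ≠ |x' b| := by
    intro a b hab
    rw [habs' a, habs' b]
    exact hdist _ _ ((Equiv.swap i j).injective.ne hab)
  -- integer versions
  have H2 : ∀ a b : Fin p, a ≠ b → 0 ≤ (x a - x b) * (x' a - x' b) := by
    intro a b hab
    rcases eq_or_ne a i with hai' | hai
    · rcases eq_or_ne b j with hbj' | hbj
      · rw [hai', hbj', hxi', hxj']; nlinarith [sq_nonneg (x i - x j)]
      · have hbi : b ≠ i := by rw [← hai']; exact Ne.symm hab
        rw [hai', hx'other b hbi hbj]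
        have h1 : x b ≠ x i := (hne b i hbi).1
        have h2 : x b ≠ x' i := by rw [hxi']; exact (hne b j hbj).2
        exact le_of_lt (step_prod (x i) (x' i) (x b) hstep_i h1 h2)
    rcases eq_or_ne a j with haj' | haj
    · rcases eq_or_ne b i with hbi' | hbi
      · rw [haj', hbi', hxi', hxj']; nlinarith [sq_nonneg (x j - x i)]
      · have hbj : b ≠ j := by rw [← haj']; exact Ne.symm hab
        rw [haj', hx'other b hbi hbj]
        have h1 : x b ≠ x j := (hne b j hbj).1
        have h2 : x b ≠ x' j := by rw [hxj']; exact (hne b i hbi).2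
        exact le_of_lt (step_prod (x j) (x' j) (x b) hstep_j h1 h2)
    rw [hx'other a hai haj]
    rcases eq_or_ne b i with hbi' | hbi
    · have h1 : x a ≠ x i := (hne a i hai).1
      have h2 : x a ≠ x' i := by rw [hxi']; exact (hne a j haj).2
      rw [hbi']
      nlinarith [step_prod (x i) (x' i) (x a) hstep_i h1 h2]
    rcases eq_or_ne b j with hbj' | hbj
    · have h1 : x a ≠ x j := (hne a j haj).1
      have h2 : x a ≠ x' j := by rw [hxj']; exact (hne a i hai).2
      rw [hbj']
      nlinarith [step_prod (x j) (x' j) (x a) hstep_j h1 h2]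
    · rw [hx'other b hbi hbj]; exact mul_self_nonneg _
  have H3pos : (x i + x j) * (x' i + x' j) < 0 := by
    have he : (x i + x j) * (x' i + x' j) = -((x i + x j) ^ 2) := by
      rw [hxi', hxj']; ring
    rw [he]
    rcases hsum with h | h <;> rw [h] <;> norm_num
  have H3neg : ∀ a b : Fin p, a ≠ b → ¬(a = i ∧ b = j) → ¬(a = j ∧ b = i) →
      0 ≤ (x a + x b) * (x' a + x' b) := by
    intro a b hab hn1 hn2
    rcases eq_or_ne a i with hai' | hai
    · have hbj : b ≠ j := fun h => hn1 ⟨hai', h⟩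
      have hbi : b ≠ i := by rw [← hai']; exact Ne.symm hab
      rw [hai', hx'other b hbi hbj]
      have h1 : -x b ≠ x i := fun h => (hne b i hbi).2 (by omega)
      have h2 : -x b ≠ x' i := by
        rw [hxi']; intro h; exact (hne b j hbj).1 (by omega)
      nlinarith [step_prod (x i) (x' i) (-x b) hstep_i h1 h2]
    rcases eq_or_ne a j with haj' | haj
    · have hbi : b ≠ i := fun h => hn2 ⟨haj', h⟩
      have hbj : b ≠ j := by rw [← haj']; exact Ne.symm hab
      rw [haj', hx'other b hbi hbj]
      have h1 : -x b ≠ x j := fun h => (hne b j hbj).2 (by omega)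
      have h2 : -x b ≠ x' j := by
        rw [hxj']; intro h; exact (hne b i hbi).1 (by omega)
      nlinarith [step_prod (x j) (x' j) (-x b) hstep_j h1 h2]
    rw [hx'other a hai haj]
    rcases eq_or_ne b i with hbi' | hbi
    · have h1 : -x a ≠ x i := fun h => (hne a i hai).2 (by omega)
      have h2 : -x a ≠ x' i := by
        rw [hxi']; intro h; exact (hne a j haj).1 (by omega)
      rw [hbi']
      nlinarith [step_prod (x i) (x' i) (-x a) hstep_i h1 h2]
    rcases eq_or_ne b j with hbj' | hbj
    · have h1 : -x a ≠ x j := fun h => (hne a j haj).2 (by omega)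
      have h2 : -x a ≠ x' j := by
        rw [hxj']; intro h; exact (hne a i hai).1 (by omega)
      rw [hbj']
      nlinarith [step_prod (x j) (x' j) (-x a) hstep_j h1 h2]
    · rw [hx'other b hbi hbj]; exact mul_self_nonneg _
  have H4 : ∀ a : Fin p, 0 < x a * x' a := by
    intro a
    rcases eq_or_ne a i with hai' | hai
    · rw [hai']
      have := step_prod (x i) (x' i) 0 hstep_i (Ne.symm (h0 i)) (Ne.symm (h0' i))
      simpa using this
    rcases eq_or_ne a j with haj' | haj
    · rw [haj']
      have := step_prod (x j) (x' j) 0 hstep_j (Ne.symm (h0 j)) (Ne.symm (h0' j))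
      simpa using this
    · rw [hx'other a hai haj]; exact mul_self_pos.mpr (h0 a)
  -- real versions
  have R2 : ∀ a b : Fin p, a < b →
      ¬ ((toR x a - toR x b) * (toR x' a - toR x' b) < 0) := by
    intro a b hab
    simp only [toR]
    rw [show ((x a : ℝ) - (x b : ℝ)) * ((x' a : ℝ) - (x' b : ℝ))
        = (((x a - x b) * (x' a - x' b) : ℤ) : ℝ) by push_cast; ring, not_lt]
    exact_mod_cast H2 a b (ne_of_lt hab)
  have R3 : ∀ a b : Fin p, a < b →
      ((toR x a + toR x b) * (toR x' a + toR x' b) < 0 ↔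
        (a = i ∧ b = j) ∨ (a = j ∧ b = i)) := by
    intro a b hab
    simp only [toR]
    rw [show ((x a : ℝ) + (x b : ℝ)) * ((x' a : ℝ) + (x' b : ℝ))
        = (((x a + x b) * (x' a + x' b) : ℤ) : ℝ) by push_cast; ring]
    rw [show ((0 : ℝ) = ((0 : ℤ) : ℝ)) by norm_num, Int.cast_lt]
    constructor
    · intro h
      by_contra hn
      exact absurd h (not_lt.mpr (H3neg a b (ne_of_lt hab)
        (fun hc => hn (Or.inl hc)) (fun hc => hn (Or.inr hc))))
    · rintro (⟨rfl, rfl⟩ | ⟨rfl, rfl⟩)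
      · exact H3pos
      · rw [show (x a + x b) * (x' a + x' b) = (x b + x a) * (x' b + x' a) by ring]
        exact H3pos
  have R4 : ∀ a : Fin p, ¬ (toR x a * toR x' a < 0) := by
    intro a
    simp only [toR]
    rw [show ((x a : ℝ)) * ((x' a : ℝ)) = ((x a * x' a : ℤ) : ℝ) by push_cast; ring, not_lt]
    exact_mod_cast le_of_lt (H4 a)
  refine ⟨?_, R2, R3, fun a _ => R4 a, ?_⟩
  · rintro H (⟨a, b, hab, rfl⟩ | ⟨a, b, hab, rfl⟩ | ⟨a, ha, rfl⟩) hmem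
    · simp only [Set.mem_setOf_eq, toR] at hmem
      have : x' a = x' b := by exact_mod_cast sub_eq_zero.mp hmem
      exact hdist' a b (ne_of_lt hab) (by rw [this])
    · simp only [Set.mem_setOf_eq, toR] at hmem
      have : x' a = -(x' b) := by exact_mod_cast eq_neg_of_add_eq_zero_left hmem
      exact hdist' a b (ne_of_lt hab) (by rw [this, abs_neg])
    · simp only [Set.mem_setOf_eq, toR] at hmem
      exact h0' a (by exact_mod_cast hmem)
  · unfold sep
    have c1 : (Finset.univ.filter fun q : Fin p × Fin p =>
        q.1 < q.2 ∧ (toR x q.1 - toR x q.2) * (toR x' q.1 - toR x' q.2) < 0).card = 0 := by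
      rw [Finset.card_eq_zero, Finset.filter_eq_empty_iff]
      rintro q - ⟨hlt, h⟩
      exact R2 q.1 q.2 hlt h
    have c3 : (Finset.univ.filter fun a : Fin p =>
        p - k ≤ (a : ℕ) ∧ toR x a * toR x' a < 0).card = 0 := by
      rw [Finset.card_eq_zero, Finset.filter_eq_empty_iff]
      rintro a - ⟨-, h⟩
      exact R4 a h
    have c2 : (Finset.univ.filter fun q : Fin p × Fin p =>
        q.1 < q.2 ∧ (toR x q.1 + toR x q.2) * (toR x' q.1 + toR x' q.2) < 0).card = 1 := by
      rcases lt_or_gt_of_ne hij with hlt | hlt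
      · rw [show (Finset.univ.filter fun q : Fin p × Fin p =>
            q.1 < q.2 ∧ (toR x q.1 + toR x q.2) * (toR x' q.1 + toR x' q.2) < 0) = {(i, j)} from ?_]
        · exact Finset.card_singleton _
        ext q
        simp only [Finset.mem_filter, Finset.mem_univ, true_and, Finset.mem_singleton]
        constructor
        · rintro ⟨h1, h2⟩
          rcases (R3 q.1 q.2 h1).mp h2 with ⟨h3, h4⟩ | ⟨h3, h4⟩
          · exact Prod.ext_iff.mpr ⟨h3, h4⟩
          · rw [h3, h4] at h1; exact (lt_asymm hlt h1).elim
        · rintro rfl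
          exact ⟨hlt, (R3 i j hlt).mpr (Or.inl ⟨rfl, rfl⟩)⟩
      · rw [show (Finset.univ.filter fun q : Fin p × Fin p =>
            q.1 < q.2 ∧ (toR x q.1 + toR x q.2) * (toR x' q.1 + toR x' q.2) < 0) = {(j, i)} from ?_]
        · exact Finset.card_singleton _
        ext q
        simp only [Finset.mem_filter, Finset.mem_univ, true_and, Finset.mem_singleton]
        constructor
        · rintro ⟨h1, h2⟩
          rcases (R3 q.1 q.2 h1).mp h2 with ⟨h3, h4⟩ | ⟨h3, h4⟩
          · rw [h3, h4] at h1; exact (lt_asymm hlt h1).elim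
          · exact Prod.ext_iff.mpr ⟨h3, h4⟩
        · rintro rfl
          exact ⟨hlt, (R3 j i hlt).mpr (Or.inr ⟨rfl, rfl⟩)⟩
    rw [c1, c2, c3]
end

section
/- Let p ≥ 1 and 1 ≤ k ≤ p be integers, let x ∈ M_p^k, and let i be an index with p − k < i ≤ p and x_i ∈ {1, −1}. Let x′ be obtained from x by replacing x_i with −x_i. Then x′ ∈ M_p^k, and exactly one hyperplane of 𝒟_p^k separates x and x′, namely ker(x_i); in particular sep_p^k(x, x′) = 1. -/
open Polynomial Finset

/-- if `x ∈ M_p^k`, `i` is a (0-indexed) coordinate with `p - k ≤ i`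
(1-indexed: `p - k < i ≤ p`) and `x_i = ±1`, then the point `x'` obtained from `x` by
replacing `x_i` by `-x_i` lies in `M_p^k`, and exactly one hyperplane of `𝒟_p^k`
separates `x` and `x'`, namely `ker x_i`; in particular `sep_p^k(x, x') = 1`. -/
theorem wall_crossing_coord (p k : ℕ) (hp : 1 ≤ p) (hk1 : 1 ≤ k) (hk : k ≤ p)
    (x : Fin p → ℤ) (hx : x ∈ Mfin p k) (i : Fin p) (hi : p - k ≤ (i : ℕ))
    (hxi : x i = 1 ∨ x i = -1)
    (x' : Fin p → ℤ) (hx'i : x' i = -(x i))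
    (hx'other : ∀ m : Fin p, m ≠ i → x' m = x m) :
    x' ∈ Mfin p k ∧
    (∀ a b : Fin p, a < b →
      ¬ ((toR x a - toR x b) * (toR x' a - toR x' b) < 0)) ∧
    (∀ a b : Fin p, a < b →
      ¬ ((toR x a + toR x b) * (toR x' a + toR x' b) < 0)) ∧
    (∀ a : Fin p, p - k ≤ (a : ℕ) → (toR x a * toR x' a < 0 ↔ a = i)) ∧
    sep p k (toR x) (toR x') = 1 := by
  classical
  simp only [Mfin, Finset.mem_filter, Fintype.mem_piFinset, Finset.mem_Icc] at hx
  obtain ⟨hrange, hne0, habs, hneg1⟩ := hx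
  have hx2 : x i ^ 2 = 1 := by rcases hxi with h | h <;> rw [h] <;> ring
  have hxiabs : |x i| = 1 := by rcases hxi with h | h <;> rw [h] <;> rfl
  have habs' : ∀ m, |x' m| = |x m| := by
    intro m
    by_cases hm : m = i
    · subst hm; rw [hx'i, abs_neg]
    · rw [hx'other m hm]
  have h4 : ∀ m : Fin p, m ≠ i → 4 ≤ x m ^ 2 := by
    intro m hm
    have h1 := habs m i hm
    have h0 := hne0 m
    rw [hxiabs] at h1
    have h5 : 1 ≤ |x m| := Int.one_le_abs h0
    have h2 : 2 ≤ |x m| := by omega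
    nlinarith [sq_abs (x m)]
  have hdiff : ∀ a b : Fin p, a ≠ b → 0 ≤ (x a - x b) * (x' a - x' b) := by
    intro a b hab
    by_cases ha : a = i
    · subst ha
      rw [hx'i, hx'other b (Ne.symm hab)]
      nlinarith [h4 b (Ne.symm hab)]
    · by_cases hb : b = i
      · subst hb
        rw [hx'i, hx'other a ha]
        nlinarith [h4 a ha]
      · rw [hx'other a ha, hx'other b hb]
        exact mul_self_nonneg _
  have hsum : ∀ a b : Fin p, a ≠ b → 0 ≤ (x a + x b) * (x' a + x' b) := by
    intro a b hab
    by_cases ha : a = i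
    · subst ha
      rw [hx'i, hx'other b (Ne.symm hab)]
      nlinarith [h4 b (Ne.symm hab)]
    · by_cases hb : b = i
      · subst hb
        rw [hx'i, hx'other a ha]
        nlinarith [h4 a ha]
      · rw [hx'other a ha, hx'other b hb]
        exact mul_self_nonneg _
  have hnd : ∀ a b : Fin p, a < b →
      ¬ ((toR x a - toR x b) * (toR x' a - toR x' b) < 0) := by
    intro a b hab
    rw [not_lt]
    have := hdiff a b (ne_of_lt hab)
    simp only [toR]
    exact_mod_cast this
  have hns : ∀ a b : Fin p, a < b →
      ¬ ((toR x a + toR x b) * (toR x' a + toR x' b) < 0) := by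
    intro a b hab
    rw [not_lt]
    have := hsum a b (ne_of_lt hab)
    simp only [toR]
    exact_mod_cast this
  have hzero : ∀ a : Fin p, toR x a * toR x' a < 0 ↔ a = i := by
    intro a
    constructor
    · intro h
      by_contra hne
      rw [toR, toR, hx'other a hne] at h
      exact absurd h (not_lt.mpr (mul_self_nonneg _))
    · intro h
      rw [h]
      have hz : x i * x' i < 0 := by rw [hx'i]; nlinarith [hx2]
      have : ((x i * x' i : ℤ) : ℝ) < 0 := by exact_mod_cast hz
      simpa [toR] using this
  have hmem : x' ∈ Mfin p k := by
    simp only [Mfin, Finset.mem_filter, Fintype.mem_piFinset, Finset.mem_Icc]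
    refine ⟨fun m => ?_, fun m => ?_, fun a b hab => ?_, fun m hm => ?_⟩
    · have h3 : |x m| ≤ (p : ℤ) := abs_le.mpr (hrange m)
      have h5 : |x' m| ≤ (p : ℤ) := by rw [habs' m]; exact h3
      exact abs_le.mp h5
    · intro h
      have h1 := habs' m
      rw [h, abs_zero] at h1
      exact hne0 m (abs_eq_zero.mp h1.symm)
    · rw [habs' a, habs' b]; exact habs a b hab
    · have hmi : m ≠ i := by
        intro h; rw [h] at hm; omega
      rw [hx'other m hmi]; exact hneg1 m hm
  refine ⟨hmem, hnd, hns, fun a _ => hzero a, ?_⟩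
  have e1 : (Finset.univ.filter fun q : Fin p × Fin p =>
      q.1 < q.2 ∧ (toR x q.1 - toR x q.2) * (toR x' q.1 - toR x' q.2) < 0) = ∅ := by
    rw [Finset.filter_eq_empty_iff]
    rintro q - ⟨hlt, hneg⟩
    exact hnd q.1 q.2 hlt hneg
  have e2 : (Finset.univ.filter fun q : Fin p × Fin p =>
      q.1 < q.2 ∧ (toR x q.1 + toR x q.2) * (toR x' q.1 + toR x' q.2) < 0) = ∅ := by
    rw [Finset.filter_eq_empty_iff]
    rintro q - ⟨hlt, hneg⟩
    exact hns q.1 q.2 hlt hneg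
  have e3 : (Finset.univ.filter fun a : Fin p =>
      p - k ≤ (a : ℕ) ∧ toR x a * toR x' a < 0) = {i} := by
    ext a
    simp only [Finset.mem_filter, Finset.mem_univ, true_and, Finset.mem_singleton]
    constructor
    · rintro ⟨-, h⟩; exact (hzero a).mp h
    · intro h; rw [h]; exact ⟨hi, (hzero i).mpr rfl⟩
  rw [sep, e1, e2, e3]
  simp
end

section
/- For all integers p ≥ 1 and 0 ≤ k ≤ p, the set M_p^k has cardinality 2^{p−1} · (p−1)! · (p+k); consequently (since each region of 𝒟_p^k contains exactly one point of M_p^k) the arrangement 𝒟_p^k has exactly 2^{p−1} · (p−1)! · (p+k) regions. -/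
open Polynomial Finset

lemma mul_pos_trans {a b c : ℝ} (h1 : 0 < a * b) (h2 : 0 < b * c) : 0 < a * c := by
  rcases lt_trichotomy b 0 with hb | hb | hb
  · exact mul_pos_of_neg_of_neg (by nlinarith) (by nlinarith)
  · rw [hb, mul_zero] at h1; exact absurd h1 (lt_irrefl 0)
  · exact mul_pos (by nlinarith) (by nlinarith)

/-- The open "sign region" of a point `u`. -/
def Rset (p k : ℕ) (u : Fin p → ℝ) : Set (Fin p → ℝ) :=
  {v | (∀ i j : Fin p, i < j → 0 < (u i - u j) * (v i - v j)) ∧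
       (∀ i j : Fin p, i < j → 0 < (u i + u j) * (v i + v j)) ∧
       (∀ i : Fin p, p - k ≤ (i : ℕ) → 0 < u i * v i)}

lemma mem_comp_iff {p k : ℕ} {u : Fin p → ℝ} :
    u ∈ comp p k ↔ (∀ i j : Fin p, i < j → u i - u j ≠ 0) ∧
      (∀ i j : Fin p, i < j → u i + u j ≠ 0) ∧
      (∀ i : Fin p, p - k ≤ (i : ℕ) → u i ≠ 0) := by
  have hmem : u ∈ (⋃ H ∈ hyps p k, H) ↔ ∃ H, H ∈ hyps p k ∧ u ∈ H := by
    simp only [Set.mem_iUnion, exists_prop]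
  constructor
  · intro h
    rw [_root_.comp, Set.mem_compl_iff, hmem] at h
    push_neg at h
    refine ⟨fun i j hij hne => ?_, fun i j hij hne => ?_, fun i hi hne => ?_⟩
    · exact h _ (Or.inl ⟨i, j, hij, rfl⟩) hne
    · exact h _ (Or.inr (Or.inl ⟨i, j, hij, rfl⟩)) hne
    · exact h _ (Or.inr (Or.inr ⟨i, hi, rfl⟩)) hne
  · rintro ⟨h1, h2, h3⟩
    rw [_root_.comp, Set.mem_compl_iff, hmem]
    rintro ⟨H, (⟨i, j, hij, rfl⟩ | ⟨i, j, hij, rfl⟩ | ⟨i, hi, rfl⟩), hu⟩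
    · exact h1 i j hij hu
    · exact h2 i j hij hu
    · exact h3 i hi hu

lemma self_mem_Rset {p k : ℕ} {u : Fin p → ℝ} (hu : u ∈ comp p k) : u ∈ Rset p k u := by
  rw [mem_comp_iff] at hu
  exact ⟨fun i j hij => mul_self_pos.2 (hu.1 i j hij),
    fun i j hij => mul_self_pos.2 (hu.2.1 i j hij),
    fun i hi => mul_self_pos.2 (hu.2.2 i hi)⟩

lemma Rset_subset_comp {p k : ℕ} {u : Fin p → ℝ} : Rset p k u ⊆ comp p k := by
  rintro v ⟨h1, h2, h3⟩
  rw [mem_comp_iff]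
  refine ⟨fun i j hij hv => ?_, fun i j hij hv => ?_, fun i hi hv => ?_⟩
  · have := h1 i j hij; rw [hv, mul_zero] at this; exact absurd this (lt_irrefl 0)
  · have := h2 i j hij; rw [hv, mul_zero] at this; exact absurd this (lt_irrefl 0)
  · have := h3 i hi; rw [hv, mul_zero] at this; exact absurd this (lt_irrefl 0)

lemma Rset_eq_of_mem {p k : ℕ} {u v : Fin p → ℝ} (h : v ∈ Rset p k u) :
    Rset p k v = Rset p k u := by
  have key : ∀ u' v' : Fin p → ℝ, v' ∈ Rset p k u' → Rset p k v' ⊆ Rset p k u' := by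
    rintro u' v' ⟨a1, a2, a3⟩ w ⟨b1, b2, b3⟩
    exact ⟨fun i j hij => mul_pos_trans (a1 i j hij) (b1 i j hij),
      fun i j hij => mul_pos_trans (a2 i j hij) (b2 i j hij),
      fun i hi => mul_pos_trans (a3 i hi) (b3 i hi)⟩
  have hsymm : u ∈ Rset p k v := by
    obtain ⟨a1, a2, a3⟩ := h
    exact ⟨fun i j hij => by rw [mul_comm]; exact a1 i j hij,
      fun i j hij => by rw [mul_comm]; exact a2 i j hij,
      fun i hi => by rw [mul_comm]; exact a3 i hi⟩
  exact le_antisymm (key _ _ h) (key _ _ hsymm)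

lemma isOpen_Rset {p k : ℕ} (u : Fin p → ℝ) : IsOpen (Rset p k u) := by
  have haux : ∀ c : ℝ, ∀ f : (Fin p → ℝ) → ℝ, Continuous f → IsOpen {v : Fin p → ℝ | 0 < c * f v} :=
    fun c f hf => isOpen_lt continuous_const (continuous_const.mul hf)
  have : Rset p k u =
      (⋂ i, ⋂ j, {v : Fin p → ℝ | i < j → 0 < (u i - u j) * (v i - v j)}) ∩
      ((⋂ i, ⋂ j, {v : Fin p → ℝ | i < j → 0 < (u i + u j) * (v i + v j)}) ∩
       (⋂ i : Fin p, {v : Fin p → ℝ | p - k ≤ (i : ℕ) → 0 < u i * v i})) := by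
    ext v
    simp only [Rset, Set.mem_setOf_eq, Set.mem_inter_iff, Set.mem_iInter]
  rw [this]
  refine IsOpen.inter ?_ (IsOpen.inter ?_ ?_)
  · refine isOpen_iInter_of_finite fun i => isOpen_iInter_of_finite fun j => ?_
    by_cases hij : i < j
    · simp only [hij, forall_true_left]
      exact haux _ _ (by fun_prop)
    · simp only [hij, false_implies, Set.setOf_true]; exact isOpen_univ
  · refine isOpen_iInter_of_finite fun i => isOpen_iInter_of_finite fun j => ?_
    by_cases hij : i < j
    · simp only [hij, forall_true_left]
      exact haux _ _ (by fun_prop)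
    · simp only [hij, false_implies, Set.setOf_true]; exact isOpen_univ
  · refine isOpen_iInter_of_finite fun i => ?_
    by_cases hi : p - k ≤ (i : ℕ)
    · simp only [hi, forall_true_left]
      exact haux _ _ (by fun_prop)
    · simp only [hi, false_implies, Set.setOf_true]; exact isOpen_univ

lemma convex_Rset {p k : ℕ} (u : Fin p → ℝ) : Convex ℝ (Rset p k u) := by
  rintro v ⟨a1, a2, a3⟩ w ⟨b1, b2, b3⟩ a b ha hb hab
  have key : ∀ X Y : ℝ, 0 < X → 0 < Y → 0 < a * X + b * Y := by
    intro X Y hX hY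
    rcases eq_or_lt_of_le ha with h | h
    · rw [← h] at hab ⊢; simp at hab ⊢; nlinarith
    · nlinarith
  refine ⟨fun i j hij => ?_, fun i j hij => ?_, fun i hi => ?_⟩
  · have : (u i - u j) * ((a • v + b • w) i - (a • v + b • w) j)
        = a * ((u i - u j) * (v i - v j)) + b * ((u i - u j) * (w i - w j)) := by
      simp only [Pi.add_apply, Pi.smul_apply, smul_eq_mul]
      have h1 : a + b = 1 := hab
      nlinarith [h1]
    rw [this]; exact key _ _ (a1 i j hij) (b1 i j hij)
  · have : (u i + u j) * ((a • v + b • w) i + (a • v + b • w) j)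
        = a * ((u i + u j) * (v i + v j)) + b * ((u i + u j) * (w i + w j)) := by
      simp only [Pi.add_apply, Pi.smul_apply, smul_eq_mul]
      nlinarith [hab]
    rw [this]; exact key _ _ (a2 i j hij) (b2 i j hij)
  · have : u i * ((a • v + b • w) i) = a * (u i * v i) + b * (u i * w i) := by
      simp only [Pi.add_apply, Pi.smul_apply, smul_eq_mul]; ring
    rw [this]; exact key _ _ (a3 i hi) (b3 i hi)

lemma connectedComponentIn_eq_Rset {p k : ℕ} {u : Fin p → ℝ} (hu : u ∈ comp p k) :
    connectedComponentIn (comp p k) u = Rset p k u := by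
  have hsub : Rset p k u ⊆ connectedComponentIn (comp p k) u :=
    (convex_Rset u).isPreconnected.subset_connectedComponentIn (self_mem_Rset hu)
      Rset_subset_comp
  refine le_antisymm ?_ hsub
  set O : Set (Fin p → ℝ) := ⋃ v ∈ comp p k \ Rset p k u, Rset p k v with hO
  have hOopen : IsOpen O := isOpen_biUnion fun v _ => isOpen_Rset v
  have hcover : comp p k ⊆ Rset p k u ∪ O := by
    intro w hw
    by_cases hwu : w ∈ Rset p k u
    · exact Or.inl hwu
    · exact Or.inr (Set.mem_biUnion ⟨hw, hwu⟩ (self_mem_Rset hw))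
  have hdisj : Disjoint (Rset p k u) O := by
    rw [Set.disjoint_left]
    intro w hwu hwO
    obtain ⟨v, hv, hwv⟩ := Set.mem_iUnion₂.1 hwO
    have h1 : Rset p k w = Rset p k u := Rset_eq_of_mem hwu
    have h2 : Rset p k w = Rset p k v := Rset_eq_of_mem hwv
    exact hv.2 (h1 ▸ h2 ▸ self_mem_Rset hv.1)
  have := (isPreconnected_connectedComponentIn (x := u) (F := comp p k))
  exact IsPreconnected.subset_left_of_subset_union (isOpen_Rset u) hOopen hdisj
    ((connectedComponentIn_subset _ _).trans hcover)
    ⟨u, mem_connectedComponentIn hu, self_mem_Rset hu⟩ this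

/-- rank of `|u i|` among the `|u j|`. -/
noncomputable def rk {p : ℕ} (u : Fin p → ℝ) (i : Fin p) : ℕ :=
  (Finset.univ.filter fun j => |u j| < |u i|).card

noncomputable def xof (p k : ℕ) (u : Fin p → ℝ) : Fin p → ℤ := fun i =>
  (if u i < 0 ∧ ¬((i : ℕ) < p - k ∧ rk u i = 0) then -1 else 1) * ((rk u i : ℤ) + 1)

lemma habs_of_comp {p k : ℕ} {u : Fin p → ℝ} (hu : u ∈ comp p k) :
    ∀ i j : Fin p, i ≠ j → |u i| ≠ |u j| := by
  rw [mem_comp_iff] at hu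
  have key : ∀ i j : Fin p, i < j → |u i| ≠ |u j| := by
    intro i j hij habs
    rcases abs_eq_abs.1 habs with h | h
    · exact hu.1 i j hij (by linarith)
    · exact hu.2.1 i j hij (by linarith)
  intro i j hij
  rcases hij.lt_or_gt with h | h
  · exact key i j h
  · exact fun he => key j i h he.symm

lemma rk_lt_rk {p : ℕ} {u : Fin p → ℝ} {i j : Fin p} (h : |u i| < |u j|) :
    rk u i < rk u j := by
  apply Finset.card_lt_card
  constructor
  · intro l hl
    simp only [Finset.mem_filter, Finset.mem_univ, true_and] at hl ⊢
    exact lt_trans hl h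
  · intro hsub
    have := hsub (by simp only [Finset.mem_filter, Finset.mem_univ, true_and]; exact h)
    simp only [Finset.mem_filter, Finset.mem_univ, true_and] at this
    exact absurd this (lt_irrefl _)

lemma rk_lt {p : ℕ} (u : Fin p → ℝ) (i : Fin p) : rk u i < p := by
  unfold rk
  have hsub : (Finset.univ.filter fun j => |u j| < |u i|) ⊆ Finset.univ.erase i := by
    intro l hl
    simp only [Finset.mem_filter, Finset.mem_univ, true_and] at hl
    refine Finset.mem_erase.2 ⟨fun he => ?_, Finset.mem_univ l⟩
    rw [he] at hl; exact absurd hl (lt_irrefl _)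
  have h1 := Finset.card_le_card hsub
  rw [Finset.card_erase_of_mem (Finset.mem_univ i), Finset.card_univ, Fintype.card_fin] at h1
  have hp : 0 < p := i.pos
  omega

lemma abs_xof {p k : ℕ} (u : Fin p → ℝ) (i : Fin p) :
    |xof p k u i| = (rk u i : ℤ) + 1 := by
  unfold xof
  have h0 : |(rk u i : ℤ) + 1| = (rk u i : ℤ) + 1 := abs_of_nonneg (by positivity)
  split
  · rw [abs_mul, h0]; norm_num
  · rw [one_mul, h0]

lemma xof_mem_Mfin {p k : ℕ} {u : Fin p → ℝ} (hu : u ∈ comp p k) :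
    xof p k u ∈ Mfin p k := by
  have habs := habs_of_comp hu
  have hb : ∀ i, |xof p k u i| = (rk u i : ℤ) + 1 := abs_xof u
  rw [Mfin, Finset.mem_filter]
  refine ⟨Fintype.mem_piFinset.2 fun i => ?_, fun i hi => ?_, fun i j hij => ?_, fun i hik hne => ?_⟩
  · have h1 : |xof p k u i| ≤ (p : ℤ) := by
      rw [hb i]
      have h2 : rk u i + 1 ≤ p := Nat.succ_le_of_lt (rk_lt u i)
      exact_mod_cast h2
    rw [Finset.mem_Icc]
    constructor <;> [skip; skip] <;> cases' abs_le.1 h1 with h2 h3 <;> linarith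
  · have := hb i
    rw [hi] at this
    simp at this
    omega
  · rw [hb i, hb j]
    intro he
    have hrk1 : rk u i + 1 = rk u j + 1 := by exact_mod_cast he
    have hrk : rk u i = rk u j := by omega
    rcases (habs i j hij).lt_or_gt with h | h
    · exact absurd hrk (Nat.ne_of_lt (rk_lt_rk h))
    · exact absurd hrk.symm (Nat.ne_of_lt (rk_lt_rk h))
  · have habs1 : |xof p k u i| = 1 := by rw [hne]; rfl
    rw [hb i] at habs1
    have hrk0 : rk u i = 0 := by omega
    unfold xof at hne
    split at hne
    · next hcond => exact hcond.2 ⟨hik, hrk0⟩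
    · rw [one_mul] at hne; omega

lemma key_pair {a b c d : ℝ} (hab : |a| < |b|) (hcd : |c| < |d|) (hbd : 0 < b * d) :
    0 < (a - b) * (c - d) ∧ 0 < (a + b) * (c + d) := by
  rcases lt_trichotomy b 0 with hb | hb | hb
  · rcases lt_trichotomy d 0 with hd | hd | hd
    · rw [abs_of_neg hb] at hab
      rw [abs_of_neg hd] at hcd
      obtain ⟨ha1, ha2⟩ := abs_lt.1 hab
      obtain ⟨hc1, hc2⟩ := abs_lt.1 hcd
      exact ⟨mul_pos (by linarith) (by linarith),
        mul_pos_of_neg_of_neg (by linarith) (by linarith)⟩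
    · rw [hd, mul_zero] at hbd; exact absurd hbd (lt_irrefl 0)
    · nlinarith
  · rw [hb, abs_zero] at hab
    exact absurd hab (not_lt.2 (abs_nonneg a))
  · have hd : 0 < d := by nlinarith
    rw [abs_of_pos hb] at hab
    rw [abs_of_pos hd] at hcd
    obtain ⟨ha1, ha2⟩ := abs_lt.1 hab
    obtain ⟨hc1, hc2⟩ := abs_lt.1 hcd
    exact ⟨mul_pos_of_neg_of_neg (by linarith) (by linarith),
      mul_pos (by linarith) (by linarith)⟩

lemma toR_xof_mem_Rset {p k : ℕ} {u : Fin p → ℝ} (hu : u ∈ comp p k) :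
    toR (xof p k u) ∈ Rset p k u := by
  have habs := habs_of_comp hu
  set x : Fin p → ℤ := xof p k u with hx
  have habsR : ∀ i, |toR x i| = (rk u i : ℝ) + 1 := by
    intro i
    have := abs_xof (k := k) u i
    rw [toR, ← Int.cast_abs, this]
    push_cast
    ring
  have hsig : ∀ j : Fin p, u j ≠ 0 → (0 < rk u j ∨ p - k ≤ (j : ℕ)) →
      0 < u j * toR x j := by
    intro j hj hcond
    rw [toR, hx]
    unfold xof
    rcases lt_trichotomy (u j) 0 with hneg | hzero | hpos
    · have hc : u j < 0 ∧ ¬((j : ℕ) < p - k ∧ rk u j = 0) := by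
        refine ⟨hneg, fun hand => ?_⟩
        rcases hcond with h | h
        · omega
        · omega
      rw [if_pos hc]
      push_cast
      nlinarith
    · exact absurd hzero hj
    · have hc : ¬(u j < 0 ∧ ¬((j : ℕ) < p - k ∧ rk u j = 0)) := by
        intro hand; linarith [hand.1]
      rw [if_neg hc]
      push_cast
      nlinarith
  have hpair : ∀ i j : Fin p, i < j →
      0 < (u i - u j) * (toR x i - toR x j) ∧ 0 < (u i + u j) * (toR x i + toR x j) := by
    intro i j hij
    rcases (habs i j hij.ne).lt_or_gt with h | h
    · have hrk : rk u i < rk u j := rk_lt_rk h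
      have hXabs : |toR x i| < |toR x j| := by
        rw [habsR i, habsR j]
        have := Nat.add_lt_add_right hrk 1
        exact_mod_cast this
      have huj : u j ≠ 0 := by
        intro h0; rw [h0, abs_zero] at h; exact absurd (lt_of_le_of_lt (abs_nonneg _) h) (lt_irrefl _)
      exact key_pair h hXabs (hsig j huj (Or.inl (Nat.lt_of_le_of_lt (Nat.zero_le _) hrk)))
    · have hrk : rk u j < rk u i := rk_lt_rk h
      have hXabs : |toR x j| < |toR x i| := by
        rw [habsR i, habsR j]
        have := Nat.add_lt_add_right hrk 1
        exact_mod_cast this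
      have hui : u i ≠ 0 := by
        intro h0; rw [h0, abs_zero] at h; exact absurd (lt_of_le_of_lt (abs_nonneg _) h) (lt_irrefl _)
      have := key_pair h hXabs (hsig i hui (Or.inl (Nat.lt_of_le_of_lt (Nat.zero_le _) hrk)))
      constructor
      · nlinarith [this.1]
      · nlinarith [this.2]
  refine ⟨fun i j hij => (hpair i j hij).1, fun i j hij => (hpair i j hij).2, fun i hi => ?_⟩
  have hui : u i ≠ 0 := (mem_comp_iff.1 hu).2.2 i hi
  exact hsig i hui (Or.inr hi)
lemma Mfin_spec {p k : ℕ} {x : Fin p → ℤ} (hx : x ∈ Mfin p k) :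
    (∀ i, 1 ≤ |x i|) ∧ (∀ i, |x i| ≤ (p : ℤ)) ∧
    (∀ i j, i ≠ j → |x i| ≠ |x j|) ∧ (∀ i : Fin p, (i : ℕ) < p - k → x i ≠ -1) := by
  rw [Mfin, Finset.mem_filter] at hx
  obtain ⟨hpi, h0, hd, hne⟩ := hx
  refine ⟨fun i => ?_, fun i => ?_, hd, hne⟩
  · exact Int.one_le_abs (h0 i)
  · have := Fintype.mem_piFinset.1 hpi i
    rw [Finset.mem_Icc] at this
    rw [abs_le]; exact this

lemma Mfin_abs_facts {p k : ℕ} {x : Fin p → ℤ} (hx : x ∈ Mfin p k) :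
    (∀ i, |x i| = ((Finset.univ.filter fun j => |x j| < |x i|).card : ℤ) + 1) ∧
    (∀ m : ℤ, 1 ≤ m → m ≤ (p : ℤ) → ∃ j, |x j| = m) := by
  obtain ⟨h1, h2, hd, -⟩ := Mfin_spec hx
  have hlt : ∀ i : Fin p, (|x i| - 1).toNat < p := by
    intro i; have := h1 i; have := h2 i; omega
  set g : Fin p → Fin p := fun i => ⟨(|x i| - 1).toNat, hlt i⟩ with hg
  have ginj : Function.Injective g := by
    intro i j hij
    by_contra hne
    apply hd i j hne
    have : (|x i| - 1).toNat = (|x j| - 1).toNat := congrArg Fin.val hij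
    have := h1 i; have := h1 j
    omega
  have gbij : Function.Bijective g := Finite.injective_iff_bijective.1 ginj
  have hfilter : ∀ i : Fin p, (Finset.univ.filter fun j => |x j| < |x i|)
      = Finset.univ.filter fun j => g j < g i := by
    intro i
    ext j
    simp only [Finset.mem_filter, Finset.mem_univ, true_and, hg, Fin.mk_lt_mk]
    have := h1 i; have := h1 j
    omega
  have hcard : ∀ i : Fin p, (Finset.univ.filter fun j => g j < g i).card = (g i : ℕ) := by
    intro i
    have hbij : (Finset.univ.filter fun j => g j < g i).card
        = (Finset.univ.filter fun m => m < g i).card := by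
      apply Finset.card_bij (fun j _ => g j)
      · intro j hj
        simp only [Finset.mem_filter, Finset.mem_univ, true_and] at hj ⊢
        exact hj
      · intro a ha b hb hab
        exact ginj hab
      · intro m hm
        obtain ⟨j, hj⟩ := gbij.2 m
        refine ⟨j, ?_, hj⟩
        simp only [Finset.mem_filter, Finset.mem_univ, true_and] at hm ⊢
        rw [hj]; exact hm
    rw [hbij]
    have : (Finset.univ.filter fun m => m < g i) = Finset.Iio (g i) := by ext m; simp
    rw [this, Fin.card_Iio]
  constructor
  · intro i
    rw [hfilter i, hcard i]
    have := h1 i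
    simp only [hg]
    omega
  · intro m hm1 hm2
    have hmlt : (m - 1).toNat < p := by omega
    obtain ⟨j, hj⟩ := gbij.2 ⟨(m - 1).toNat, hmlt⟩
    refine ⟨j, ?_⟩
    have : (|x j| - 1).toNat = (m - 1).toNat := congrArg Fin.val hj
    have := h1 j
    omega

lemma abs_sq_iff {a b : ℤ} : |a| < |b| ↔ a * a < b * b := by
  rw [← abs_mul_abs_self a, ← abs_mul_abs_self b]
  constructor
  · intro h; nlinarith [abs_nonneg a, abs_nonneg b]
  · intro h; nlinarith [abs_nonneg a, abs_nonneg b]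

lemma neg_pair_lemma {a c d : ℤ} (h1 : |c| < |a|) (h2 : |d| < |a|) :
    (a - c) * (-a - d) < 0 := by
  rcases lt_trichotomy a 0 with ha | ha | ha
  · rw [abs_of_neg ha] at h1 h2
    obtain ⟨hc1, hc2⟩ := abs_lt.1 h1
    obtain ⟨hd1, hd2⟩ := abs_lt.1 h2
    exact mul_neg_of_neg_of_pos (by linarith) (by linarith)
  · rw [ha, abs_zero] at h1
    exact absurd h1 (not_lt.2 (abs_nonneg c))
  · rw [abs_of_pos ha] at h1 h2
    obtain ⟨hc1, hc2⟩ := abs_lt.1 h1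
    obtain ⟨hd1, hd2⟩ := abs_lt.1 h2
    exact mul_neg_of_pos_of_neg (by linarith) (by linarith)

lemma Mfin_inj {p k : ℕ} {x y : Fin p → ℤ} (hx : x ∈ Mfin p k) (hy : y ∈ Mfin p k)
    (h : toR y ∈ Rset p k (toR x)) : x = y := by
  obtain ⟨hx1, hx2, hx3, hx4⟩ := Mfin_spec hx
  obtain ⟨hy1, hy2, hy3, hy4⟩ := Mfin_spec hy
  obtain ⟨hA, hB, hC⟩ := h
  -- integer versions of the sign conditions, for all i ≠ j
  have hp1 : ∀ i j : Fin p, i ≠ j →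
      0 < (x i - x j) * (y i - y j) ∧ 0 < (x i + x j) * (y i + y j) := by
    have base : ∀ i j : Fin p, i < j →
        0 < (x i - x j) * (y i - y j) ∧ 0 < (x i + x j) * (y i + y j) := by
      intro i j hij
      have h1 := hA i j hij
      have h2 := hB i j hij
      rw [toR] at h1 h2
      constructor
      · exact_mod_cast (by push_cast at h1 ⊢; exact h1 :
          (0 : ℝ) < ((x i - x j) * (y i - y j) : ℤ)) 
      · exact_mod_cast (by push_cast at h2 ⊢; exact h2 :
          (0 : ℝ) < ((x i + x j) * (y i + y j) : ℤ))
    intro i j hij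
    rcases hij.lt_or_gt with hlt | hlt
    · exact base i j hlt
    · obtain ⟨b1, b2⟩ := base j i hlt
      exact ⟨by nlinarith, by nlinarith⟩
  -- same order of absolute values
  have horder : ∀ i j : Fin p, i ≠ j → (|x i| < |x j| ↔ |y i| < |y j|) := by
    intro i j hij
    obtain ⟨b1, b2⟩ := hp1 i j hij
    have hq : 0 < (x i * x i - x j * x j) * (y i * y i - y j * y j) := by nlinarith
    rw [abs_sq_iff, abs_sq_iff]
    constructor
    · intro hlt; nlinarith
    · intro hlt; nlinarith
  -- equal absolute values
  have habseq : ∀ i, |x i| = |y i| := by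
    intro i
    have hfx := (Mfin_abs_facts hx).1 i
    have hfy := (Mfin_abs_facts hy).1 i
    have : (Finset.univ.filter fun j => |x j| < |x i|)
        = Finset.univ.filter fun j => |y j| < |y i| := by
      ext j
      simp only [Finset.mem_filter, Finset.mem_univ, true_and]
      by_cases hji : j = i
      · subst hji; simp
      · exact horder j i hji
    rw [hfx, hfy, this]
  -- equal signs
  funext i
  by_contra hne
  have hyi : y i = -x i := by
    rcases abs_eq_abs.1 (habseq i) with h | h
    · exact absurd h hne
    · omega
  by_cases hone : |x i| = 1
  · by_cases hik : (i : ℕ) < p - k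
    · have hxv : x i = 1 ∨ x i = -1 := (abs_eq (by norm_num)).1 hone
      have := hx4 i hik
      have := hy4 i hik
      omega
    · have hge : p - k ≤ (i : ℕ) := le_of_not_gt hik
      have h3 := hC i hge
      rw [toR, toR] at h3
      have h3' : (0 : ℤ) < x i * y i := by exact_mod_cast (by push_cast at h3 ⊢; exact h3 :
        (0 : ℝ) < ((x i * y i : ℤ)))
      rw [hyi] at h3'
      nlinarith [mul_self_nonneg (x i)]
  · have h2le : 2 ≤ |x i| := by have := hx1 i; omega
    obtain ⟨j, hj⟩ := (Mfin_abs_facts hx).2 1 le_rfl (by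
      have := hx2 i; have := hx1 i; omega)
    have hji : j ≠ i := by
      intro hji; rw [hji] at hj; omega
    have hyj : |y j| < |x i| := by rw [← habseq j, hj]; omega
    have hxj : |x j| < |x i| := by rw [hj]; omega
    have hcontra := (hp1 i j (Ne.symm hji)).1
    rw [hyi] at hcontra
    have := neg_pair_lemma hxj hyj
    nlinarith
lemma toR_mem_comp {p k : ℕ} {x : Fin p → ℤ} (hx : x ∈ Mfin p k) : toR x ∈ comp p k := by
  obtain ⟨h1, h2, h3, h4⟩ := Mfin_spec hx
  rw [mem_comp_iff]
  refine ⟨fun i j hij hc => ?_, fun i j hij hc => ?_, fun i hi hc => ?_⟩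
  · simp only [toR] at hc
    have : x i = x j := by
      have h' : (x i : ℝ) = (x j : ℝ) := by linarith
      exact_mod_cast h'
    exact h3 i j hij.ne (by rw [this])
  · simp only [toR] at hc
    have : x i = -x j := by
      have h' : (x i : ℝ) = -(x j : ℝ) := by linarith
      exact_mod_cast h'
    exact h3 i j hij.ne (by rw [this, abs_neg])
  · simp only [toR] at hc
    have hz : x i = 0 := by exact_mod_cast hc
    have h := h1 i
    rw [hz] at h
    simp at h

lemma regions_eq_image {p k : ℕ} :
    {C : Set (Fin p → ℝ) | ∃ u ∈ comp p k, C = connectedComponentIn (comp p k) u}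
      = (fun x : Fin p → ℤ => Rset p k (toR x)) '' ↑(Mfin p k) := by
  ext C
  constructor
  · rintro ⟨u, hu, rfl⟩
    obtain ⟨m, hm, hmr⟩ : ∃ m ∈ Mfin p k, toR m ∈ Rset p k u :=
      ⟨xof p k u, xof_mem_Mfin hu, toR_xof_mem_Rset hu⟩
    exact ⟨m, hm, by
      show Rset p k (toR m) = connectedComponentIn (comp p k) u
      rw [connectedComponentIn_eq_Rset hu, Rset_eq_of_mem hmr]⟩
  · rintro ⟨m, hm, rfl⟩
    exact ⟨toR m, toR_mem_comp hm,
      (connectedComponentIn_eq_Rset (toR_mem_comp hm)).symm⟩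

lemma ncard_regions {p k : ℕ} :
    Set.ncard {C : Set (Fin p → ℝ) | ∃ u ∈ comp p k, C = connectedComponentIn (comp p k) u}
      = (Mfin p k).card := by
  rw [regions_eq_image]
  rw [Set.ncard_image_of_injOn, Set.ncard_coe_finset]
  intro a ha b hb hab
  simp only [Finset.mem_coe] at ha hb
  have hab' : Rset p k (toR a) = Rset p k (toR b) := hab
  have : toR b ∈ Rset p k (toR a) := by
    rw [hab']
    exact self_mem_Rset (toR_mem_comp hb)
  exact Mfin_inj ha hb this
/-- The magnitude permutation of an integer vector. -/
def gmap {p : ℕ} (x : Fin p → ℤ) : Fin p → Fin p :=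
  fun i => ⟨(|x i| - 1).toNat % p, Nat.mod_lt _ i.pos⟩

lemma gmap_eq {p k : ℕ} {x : Fin p → ℤ} (hx : x ∈ Mfin p k) (i : Fin p) :
    (gmap x i : ℕ) = (|x i| - 1).toNat := by
  obtain ⟨h1, h2, -, -⟩ := Mfin_spec hx
  have hlt : (|x i| - 1).toNat < p := by have := h1 i; have := h2 i; omega
  exact Nat.mod_eq_of_lt hlt

lemma gmap_bijective {p k : ℕ} {x : Fin p → ℤ} (hx : x ∈ Mfin p k) :
    Function.Bijective (gmap x) := by
  obtain ⟨h1, -, h3, -⟩ := Mfin_spec hx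
  apply Finite.injective_iff_bijective.1
  intro i j hij
  by_contra hne
  apply h3 i j hne
  have := congrArg Fin.val hij
  rw [gmap_eq hx, gmap_eq hx] at this
  have := h1 i; have := h1 j
  omega

/-- The encoding of regions as (permutation, signs) pairs. -/
def Bset (p k : ℕ) : Finset (Equiv.Perm (Fin p) × (Fin p → Bool)) :=
  Finset.univ.filter fun gs =>
    ∀ i : Fin p, ((gs.1 i : ℕ) = 0) → (i : ℕ) < p - k → gs.2 i = true

def dec {p : ℕ} (σ : Equiv.Perm (Fin p)) (s : Fin p → Bool) : Fin p → ℤ :=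
  fun i => (if s i then 1 else -1) * (((σ i : ℕ) : ℤ) + 1)

lemma dec_pos {p : ℕ} (σ : Equiv.Perm (Fin p)) {s : Fin p → Bool} {i : Fin p}
    (h : s i = true) : dec σ s i = ((σ i : ℕ) : ℤ) + 1 := by
  rw [dec, h, if_pos rfl, one_mul]

lemma dec_neg {p : ℕ} (σ : Equiv.Perm (Fin p)) {s : Fin p → Bool} {i : Fin p}
    (h : s i = false) : dec σ s i = -(((σ i : ℕ) : ℤ) + 1) := by
  rw [dec, h]
  norm_num

lemma dec_abs {p : ℕ} (σ : Equiv.Perm (Fin p)) (s : Fin p → Bool) (i : Fin p) :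
    |dec σ s i| = ((σ i : ℕ) : ℤ) + 1 := by
  have h0 : |((σ i : ℕ) : ℤ) + 1| = ((σ i : ℕ) : ℤ) + 1 := abs_of_nonneg (by positivity)
  cases hsi : s i
  · rw [dec_neg σ hsi, abs_neg, h0]
  · rw [dec_pos σ hsi, h0]

lemma card_Mfin_eq_card_Bset (p k : ℕ) : (Mfin p k).card = (Bset p k).card := by
  apply Finset.card_bij
    (i := fun x hx => (Equiv.ofBijective (gmap x) (gmap_bijective hx),
      fun i => decide (0 < x i)))
  · intro x hx
    obtain ⟨h1, h2, h3, h4⟩ := Mfin_spec hx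
    rw [Bset, Finset.mem_filter]
    refine ⟨Finset.mem_univ _, fun i h0 hik => ?_⟩
    have h0' : (gmap x i : ℕ) = 0 := h0
    rw [gmap_eq hx] at h0'
    have habs1 : |x i| = 1 := by have := h1 i; omega
    have hxi : x i = 1 := by
      rcases (abs_eq (by norm_num)).1 habs1 with h | h
      · exact h
      · exact absurd h (h4 i hik)
    show decide (0 < x i) = true
    simp [hxi]
  · intro x hxm y hym heq
    obtain ⟨hx1, hx2, hx3, hx4⟩ := Mfin_spec hxm
    obtain ⟨hy1, hy2, hy3, hy4⟩ := Mfin_spec hym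
    rw [Prod.mk.injEq] at heq
    have hgm : ∀ i, (gmap x i : ℕ) = (gmap y i : ℕ) := by
      intro i
      have := congrArg (fun e : Equiv.Perm (Fin p) => ((e i : Fin p) : ℕ)) heq.1
      exact this
    have hs : ∀ i, (0 < x i ↔ 0 < y i) := by
      intro i
      have := congrFun heq.2 i
      simpa using this
    funext i
    have habs : |x i| = |y i| := by
      have := hgm i
      rw [gmap_eq hxm, gmap_eq hym] at this
      have := hx1 i; have := hy1 i
      omega
    rcases abs_eq_abs.1 habs with h | h
    · exact h
    · have := hs i
      have := hx1 i
      omega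
  · rintro ⟨σ, s⟩ hmem
    rw [Bset, Finset.mem_filter] at hmem
    have hmem2 := hmem.2
    have hvlt : ∀ i : Fin p, (((σ i : ℕ) : ℤ) : ℤ) + 1 ≤ (p : ℤ) := by
      intro i
      have : (σ i : ℕ) < p := (σ i).isLt
      omega
    have hxm : dec σ s ∈ Mfin p k := by
      rw [Mfin, Finset.mem_filter]
      refine ⟨Fintype.mem_piFinset.2 fun i => ?_, fun i => ?_, fun i j hij => ?_,
        fun i hik => ?_⟩
      · have hb : |dec σ s i| ≤ (p : ℤ) := by rw [dec_abs]; exact hvlt i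
        rw [Finset.mem_Icc]
        exact abs_le.1 hb
      · intro h0
        have := dec_abs σ s i
        rw [h0, abs_zero] at this
        omega
      · intro he
        rw [dec_abs, dec_abs] at he
        have hv : (σ i : ℕ) = (σ j : ℕ) := by omega
        exact hij (σ.injective (Fin.ext hv))
      · intro hneg
        have h1 := dec_abs σ s i
        rw [hneg] at h1
        have hv : (σ i : ℕ) = 0 := by
          have : |(-1 : ℤ)| = 1 := by norm_num
          rw [this] at h1
          omega
        have hst := hmem2 i hv hik
        rw [dec_pos σ hst] at hneg
        omega
    refine ⟨dec σ s, hxm, ?_⟩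
    rw [Prod.mk.injEq]
    constructor
    · apply Equiv.ext
      intro i
      apply Fin.ext
      show (gmap (dec σ s) i : ℕ) = (σ i : ℕ)
      rw [gmap_eq hxm]
      have := dec_abs σ s i
      omega
    · funext i
      cases hsi : s i
      · have hneg : dec σ s i < 0 := by
          rw [dec_neg σ hsi]
          have : (0:ℤ) ≤ ((σ i : ℕ) : ℤ) := by positivity
          omega
        simp [not_lt.2 (le_of_lt hneg)]
      · have hpos : 0 < dec σ s i := by
          rw [dec_pos σ hsi]
          positivity
        simp [hpos]
lemma card_filter_bool_true (m : ℕ) (i0 : Fin (m + 1)) :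
    ((Finset.univ : Finset (Fin (m + 1) → Bool)).filter fun s => s i0 = true).card
      = 2 ^ m := by
  classical
  have hsum := Finset.card_filter_add_card_filter_not
    (s := (Finset.univ : Finset (Fin (m + 1) → Bool))) (p := fun s => s i0 = true)
  have hcount : (Finset.univ : Finset (Fin (m + 1) → Bool)).card = 2 ^ (m + 1) := by
    simp [Finset.card_univ]
  have hbij : ((Finset.univ : Finset (Fin (m + 1) → Bool)).filter fun s => s i0 = true).card
      = ((Finset.univ : Finset (Fin (m + 1) → Bool)).filter fun s => ¬s i0 = true).card := by
    apply Finset.card_bij (fun s _ => Function.update s i0 false)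
    · intro s hs
      simp only [Finset.mem_filter, Finset.mem_univ, true_and] at hs ⊢
      simp [Function.update_self]
    · intro a ha b hb hab
      simp only [Finset.mem_filter, Finset.mem_univ, true_and] at ha hb
      funext j
      by_cases hj : j = i0
      · rw [hj, ha, hb]
      · have := congrFun hab j
        rwa [Function.update_of_ne hj, Function.update_of_ne hj] at this
    · intro t ht
      simp only [Finset.mem_filter, Finset.mem_univ, true_and, Bool.not_eq_true] at ht
      refine ⟨Function.update t i0 true, ?_, ?_⟩
      · simp only [Finset.mem_filter, Finset.mem_univ, true_and]
        simp [Function.update_self]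
      · funext j
        by_cases hj : j = i0
        · rw [hj]; simp [Function.update_self, ht]
        · simp [Function.update_of_ne hj]
  rw [← hbij, hcount] at hsum
  have h2 : 2 * ((Finset.univ : Finset (Fin (m + 1) → Bool)).filter
      fun s => s i0 = true).card = 2 * 2 ^ m := by
    calc 2 * ((Finset.univ : Finset (Fin (m + 1) → Bool)).filter
          fun s => s i0 = true).card
        = ((Finset.univ : Finset (Fin (m + 1) → Bool)).filter fun s => s i0 = true).card
          + ((Finset.univ : Finset (Fin (m + 1) → Bool)).filter fun s => s i0 = true).card :=
        two_mul _
      _ = 2 ^ (m + 1) := hsum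
      _ = 2 * 2 ^ m := pow_succ' 2 m
  exact Nat.eq_of_mul_eq_mul_left (by norm_num) h2

lemma card_perm_filter (n : ℕ) (P : Fin (n + 1) → Prop) [DecidablePred P] :
    ((Finset.univ : Finset (Equiv.Perm (Fin (n + 1)))).filter fun σ => P (σ.symm 0)).card
      = ((Finset.univ : Finset (Fin (n + 1))).filter P).card * Nat.factorial n := by
  classical
  have h1 : ((Finset.univ : Finset (Equiv.Perm (Fin (n + 1)))).filter
      fun σ => P (σ.symm 0)).card = Fintype.card {σ : Equiv.Perm (Fin (n + 1)) // P (σ.symm 0)} :=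
    (Fintype.card_subtype _).symm
  have e1 : {σ : Equiv.Perm (Fin (n + 1)) // P (σ.symm 0)}
      ≃ {τ : Equiv.Perm (Fin (n + 1)) // P (τ 0)} :=
    (Equiv.inv (Equiv.Perm (Fin (n + 1)))).subtypeEquiv fun σ => by
      simp only [Equiv.inv_apply, Equiv.Perm.inv_def]
  have e2 : {τ : Equiv.Perm (Fin (n + 1)) // P (τ 0)}
      ≃ {z : Fin (n + 1) × Equiv.Perm (Fin n) // P z.1} :=
    Equiv.Perm.decomposeFin.subtypeEquiv fun τ => by
      have h : τ 0 = (Equiv.Perm.decomposeFin τ).1 := by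
        conv_lhs => rw [show τ = Equiv.Perm.decomposeFin.symm (Equiv.Perm.decomposeFin τ) by
          rw [Equiv.symm_apply_apply]]
        rw [show Equiv.Perm.decomposeFin τ
            = ((Equiv.Perm.decomposeFin τ).1, (Equiv.Perm.decomposeFin τ).2) from rfl]
        rw [Equiv.Perm.decomposeFin_symm_apply_zero]
      rw [h]
  have e3 : {z : Fin (n + 1) × Equiv.Perm (Fin n) // P z.1}
      ≃ {a : Fin (n + 1) // P a} × Equiv.Perm (Fin n) :=
    Equiv.prodSubtypeFstEquivSubtypeProd
  rw [h1, Fintype.card_congr (e1.trans (e2.trans e3)), Fintype.card_prod,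
    Fintype.card_subtype, Fintype.card_perm, Fintype.card_fin]

lemma card_fin_filter_not_lt (n m k : ℕ) (hm : m = n + 1 - k) (hk : k ≤ n + 1) :
    ((Finset.univ : Finset (Fin (n + 1))).filter fun a : Fin (n + 1) => ¬((a : ℕ) < m)).card = k := by
  have hlt : ((Finset.univ : Finset (Fin (n + 1))).filter fun a : Fin (n + 1) => (a : ℕ) < m).card = m := by
    have hbr : ((Finset.univ : Finset (Fin (n + 1))).filter
        fun a : Fin (n + 1) => (a : ℕ) < m).card = (Finset.range m).card := by
      refine Finset.card_bij (fun a _ => (a : ℕ)) ?_ ?_ ?_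
      · intro a ha
        simp only [Finset.mem_filter, Finset.mem_univ, true_and] at ha
        exact Finset.mem_range.2 ha
      · intro a ha b hb hab
        exact Fin.ext hab
      · intro b hb
        rw [Finset.mem_range] at hb
        have hb2 : b < n + 1 := by omega
        exact ⟨⟨b, hb2⟩, by simp only [Finset.mem_filter, Finset.mem_univ, true_and]; exact hb, rfl⟩
    rw [hbr, Finset.card_range]
  have hsum := Finset.card_filter_add_card_filter_not
    (s := (Finset.univ : Finset (Fin (n + 1)))) (p := fun a : Fin (n + 1) => (a : ℕ) < m)
  rw [Finset.card_univ, Fintype.card_fin] at hsum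
  omega

lemma card_Bset (n k : ℕ) (hk : k ≤ n + 1) :
    (Bset (n + 1) k).card = 2 ^ n * Nat.factorial n * (n + 1 + k) := by
  classical
  rw [Finset.card_eq_sum_card_fiberwise
    (f := fun gs : Equiv.Perm (Fin (n + 1)) × (Fin (n + 1) → Bool) => gs.1)
    (t := Finset.univ) (fun x _ => Finset.mem_univ _)]
  have hinner : ∀ σ : Equiv.Perm (Fin (n + 1)),
      ((Bset (n + 1) k).filter fun gs => gs.1 = σ).card
        = if ((σ.symm 0 : Fin (n + 1)) : ℕ) < n + 1 - k then 2 ^ n else 2 ^ (n + 1) := by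
    intro σ
    have hcard : ((Bset (n + 1) k).filter fun gs => gs.1 = σ).card
        = ((Finset.univ : Finset (Fin (n + 1) → Bool)).filter fun s =>
            (((σ.symm 0 : Fin (n + 1)) : ℕ) < n + 1 - k → s (σ.symm 0) = true)).card := by
      apply Finset.card_bij (fun gs _ => gs.2)
      · rintro ⟨τ, s⟩ hgs
        rw [Finset.mem_filter] at hgs
        obtain ⟨hB, hτ⟩ := hgs
        rw [Bset, Finset.mem_filter] at hB
        have hτ' : τ = σ := hτ
        rw [hτ'] at hB
        simp only [Finset.mem_filter, Finset.mem_univ, true_and]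
        intro hcond
        refine hB.2 (σ.symm 0) ?_ hcond
        rw [Equiv.apply_symm_apply]
        simp
      · rintro ⟨τ1, s1⟩ h1 ⟨τ2, s2⟩ h2 hab
        simp only [Finset.mem_filter] at h1 h2
        simp only at hab
        rw [Prod.mk.injEq]
        exact ⟨h1.2.trans h2.2.symm, hab⟩
      · intro s hs
        simp only [Finset.mem_filter, Finset.mem_univ, true_and] at hs
        have hmemB : (σ, s) ∈ Bset (n + 1) k := by
          rw [Bset, Finset.mem_filter]
          refine ⟨Finset.mem_univ _, fun i h0 hik => ?_⟩
          have hi : i = σ.symm 0 := by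
            apply σ.injective
            rw [Equiv.apply_symm_apply]
            exact Fin.ext h0
          subst hi
          exact hs hik
        exact ⟨(σ, s), Finset.mem_filter.2 ⟨hmemB, rfl⟩, rfl⟩
    rw [hcard]
    by_cases hcond : ((σ.symm 0 : Fin (n + 1)) : ℕ) < n + 1 - k
    · rw [if_pos hcond]
      have : ((Finset.univ : Finset (Fin (n + 1) → Bool)).filter fun s =>
          (((σ.symm 0 : Fin (n + 1)) : ℕ) < n + 1 - k → s (σ.symm 0) = true))
          = (Finset.univ : Finset (Fin (n + 1) → Bool)).filter fun s =>
            s (σ.symm 0) = true := by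
        apply Finset.filter_congr
        intro s _
        simp [hcond]
      rw [this, card_filter_bool_true]
    · rw [if_neg hcond]
      have : ((Finset.univ : Finset (Fin (n + 1) → Bool)).filter fun s =>
          (((σ.symm 0 : Fin (n + 1)) : ℕ) < n + 1 - k → s (σ.symm 0) = true))
          = (Finset.univ : Finset (Fin (n + 1) → Bool)) := by
        apply Finset.filter_true_of_mem
        intro s _
        intro hc
        exact absurd hc hcond
      rw [this]
      simp [Finset.card_univ]
  calc (∑ σ : Equiv.Perm (Fin (n + 1)),
          ((Bset (n + 1) k).filter fun gs => gs.1 = σ).card)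
      = ∑ σ : Equiv.Perm (Fin (n + 1)),
          (if ((σ.symm 0 : Fin (n + 1)) : ℕ) < n + 1 - k then 2 ^ n else 2 ^ (n + 1)) := by
        exact Finset.sum_congr rfl fun σ _ => hinner σ
    _ = ∑ σ : Equiv.Perm (Fin (n + 1)),
          (2 ^ n + if ¬(((σ.symm 0 : Fin (n + 1)) : ℕ) < n + 1 - k) then 2 ^ n else 0) := by
        refine Finset.sum_congr rfl fun σ _ => ?_
        by_cases hc : ((σ.symm 0 : Fin (n + 1)) : ℕ) < n + 1 - k
        · rw [if_pos hc, if_neg (not_not_intro hc), add_zero]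
        · rw [if_neg hc, if_pos hc, pow_succ]
          omega
    _ = 2 ^ n * Nat.factorial n * (n + 1 + k) := by
        rw [Finset.sum_add_distrib, Finset.sum_const, Finset.card_univ, Fintype.card_perm,
          Fintype.card_fin, Finset.sum_ite, Finset.sum_const_zero, Finset.sum_const,
          add_zero]
        rw [card_perm_filter n (fun a : Fin (n + 1) => ¬((a : ℕ) < n + 1 - k)),
          card_fin_filter_not_lt n (n + 1 - k) k rfl hk]
        simp only [smul_eq_mul, Nat.factorial_succ]
        ring

/-- `M_p^k` has cardinality `2^{p-1} (p-1)! (p+k)`, and consequently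
`𝒟_p^k` has exactly `2^{p-1} (p-1)! (p+k)` regions (connected components of the
complement of the union of its hyperplanes). -/
theorem card_Mpk_and_regions (p k : ℕ) (hp : 1 ≤ p) (hk : k ≤ p) :
    (Mfin p k).card = 2 ^ (p - 1) * Nat.factorial (p - 1) * (p + k) ∧
    Set.ncard {C : Set (Fin p → ℝ) | ∃ u ∈ comp p k, C = connectedComponentIn (comp p k) u}
      = 2 ^ (p - 1) * Nat.factorial (p - 1) * (p + k) := by
  obtain ⟨n, rfl⟩ : ∃ n, p = n + 1 := ⟨p - 1, by omega⟩
  have hcard : (Mfin (n + 1) k).card = 2 ^ n * Nat.factorial n * (n + 1 + k) := by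
    rw [card_Mfin_eq_card_Bset, card_Bset n k hk]
  have hgoal : 2 ^ (n + 1 - 1) * Nat.factorial (n + 1 - 1) * (n + 1 + k)
      = 2 ^ n * Nat.factorial n * (n + 1 + k) := by norm_num
  exact ⟨by rw [hgoal]; exact hcard, by rw [hgoal, ncard_regions]; exact hcard⟩
end
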